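/- arXiv:2201.08596 — 4 statements merged into one kernel-verified Lean document; each statement's English description precedes it below -/
import Mathlib

section
/- If G is a connected signed digraph containing k pairwise vertex-disjoint positive cycles (k ≥ 1), then there exists a degree-bounded finite dynamical system on G with at least 2^k fixed points. -/
open scoped Classical

/-- A signed digraph on vertex set `V`: for each ordered pair of vertices there may be
a positive arc and/or a negative arc. -/
structure SDigraph (V : Type) where
  pos : V → V → Bool
  neg : V → V → Bool

namespace SDigraph

variable {V : Type}

/-- There is an arc (of some sign) from `a` to `b` (the underlying unsigned digraph). -/
def arc (G : SDigraph V) (a b : V) : Prop := G.pos a b = true ∨ G.neg a b = true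

/-- Out-degree: positive and negative arcs are counted separately. -/
def outdeg [Fintype V] (G : SDigraph V) (i : V) : ℕ :=
  (Finset.univ.filter fun j => G.pos i j = true).card +
  (Finset.univ.filter fun j => G.neg i j = true).card

/-- In-degree: positive and negative arcs are counted separately. -/
def indeg [Fintype V] (G : SDigraph V) (i : V) : ℕ :=
  (Finset.univ.filter fun j => G.pos j i = true).card +
  (Finset.univ.filter fun j => G.neg j i = true).card

/-- The symmetrized adjacency relation (for weak connectivity). -/
def wconnRel (G : SDigraph V) (a b : V) : Prop := G.arc a b ∨ G.arc b a

/-- `G` is (weakly) connected. -/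
def Connected (G : SDigraph V) : Prop :=
  ∀ a b : V, Relation.ReflTransGen (wconnRel G) a b

/-- Directed reachability. -/
def Reach (G : SDigraph V) : V → V → Prop := Relation.ReflTransGen G.arc

/-- Out-degree in the underlying unsigned digraph. -/
noncomputable def underOutdeg [Fintype V] (G : SDigraph V) (i : V) : ℕ :=
  (Finset.univ.filter fun j => G.arc i j).card

/-- In-degree in the underlying unsigned digraph. -/
noncomputable def underIndeg [Fintype V] (G : SDigraph V) (i : V) : ℕ :=
  (Finset.univ.filter fun j => G.arc j i).card

/-- `G` is a signed cycle: the underlying digraph is a directed cycle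
(every vertex has exactly one out- and one in-neighbour and the graph is connected
and nonempty) and there are no parallel arcs. -/
def IsSignedCycleGraph [Fintype V] (G : SDigraph V) : Prop :=
  0 < Fintype.card V ∧ Connected G ∧
  (∀ a b : V, ¬(G.pos a b = true ∧ G.neg a b = true)) ∧
  (∀ i : V, underOutdeg G i = 1) ∧
  (∀ i : V, underIndeg G i = 1)

/-- `steps G m a b`: there is a directed walk of length `m` from `a` to `b`. -/
def steps (G : SDigraph V) : ℕ → V → V → Prop
  | 0 => fun a b => a = b
  | m + 1 => fun a b => ∃ c, G.arc a c ∧ steps G m c b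

/-- Directed distance from `a` to `b`, `⊤` if `b` is not reachable from `a`. -/
noncomputable def dist (G : SDigraph V) (a b : V) : ℕ∞ :=
  sInf {x : ℕ∞ | ∃ m : ℕ, steps G m a b ∧ x = (m : ℕ∞)}

/-- The strong component containing `a`, as a finite set of vertices. -/
noncomputable def scc [Fintype V] (G : SDigraph V) (a : V) : Finset V :=
  Finset.univ.filter fun b => Reach G a b ∧ Reach G b a

/-- The strong component of `a` is initial: no arc enters it from outside. -/
def Initial [Fintype V] (G : SDigraph V) (a : V) : Prop :=
  ∀ b c : V, b ∈ scc G a → G.arc c b → c ∈ scc G a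

/-- `λ(G) = max_i min_{initial strong component I} (d_G(I,i) + |I|)`. -/
noncomputable def lam [Fintype V] (G : SDigraph V) : ℕ∞ :=
  Finset.univ.sup fun i : V =>
    (Finset.univ.filter fun a : V => Initial G a).inf fun a =>
      (scc G a).inf (fun b => dist G b i) + ((scc G a).card : ℕ∞)

/-- `G` is basic: all its initial strong components are trivial
(a single vertex with no loop). -/
def Basic [Fintype V] (G : SDigraph V) : Prop :=
  ∀ a : V, Initial G a → (scc G a).card = 1 ∧ ¬ G.arc a a

/-- The (weakly) connected component containing `a`. -/
noncomputable def component [Fintype V] (G : SDigraph V) (a : V) : Finset V :=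
  Finset.univ.filter fun b => Relation.ReflTransGen (wconnRel G) a b

/-- The subgraph induced by a set `S` of vertices. -/
def induce (G : SDigraph V) (S : Finset V) : SDigraph {x : V // x ∈ S} :=
  ⟨fun a b => G.pos a.1 b.1, fun a b => G.neg a.1 b.1⟩

/-- `v` (with arc signs `s`) is a directed cycle of `G` on `m+1` distinct vertices:
for each `t` there is an arc of sign `s t` from `v t` to `v (t+1)` (cyclically). -/
def IsSignedCycleOn (G : SDigraph V) (m : ℕ)
    (v : Fin (m + 1) → V) (s : Fin (m + 1) → Bool) : Prop :=
  Function.Injective v ∧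
  ∀ t : Fin (m + 1),
    if s t then G.pos (v t) (v (t + 1)) = true else G.neg (v t) (v (t + 1)) = true

/-- `G` has a directed cycle (signs ignored). -/
def HasCycle (G : SDigraph V) : Prop :=
  ∃ (m : ℕ) (v : Fin (m + 1) → V), Function.Injective v ∧
    ∀ t : Fin (m + 1), G.arc (v t) (v (t + 1))

/-- Number of negative arcs in a sign pattern. -/
def negCount {m : ℕ} (s : Fin (m + 1) → Bool) : ℕ :=
  (Finset.univ.filter fun t => s t = false).card

/-- `G` has a positive cycle. -/
def HasPositiveCycle (G : SDigraph V) : Prop :=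
  ∃ (m : ℕ) (v : Fin (m + 1) → V) (s : Fin (m + 1) → Bool),
    IsSignedCycleOn G m v s ∧ negCount s % 2 = 0

/-- `G` has a negative cycle. -/
def HasNegativeCycle (G : SDigraph V) : Prop :=
  ∃ (m : ℕ) (v : Fin (m + 1) → V) (s : Fin (m + 1) → Bool),
    IsSignedCycleOn G m v s ∧ negCount s % 2 = 1

end SDigraph

/-- A finite dynamical system with components indexed by `V`: each `X i` is a
nonempty finite interval of integers and `f` maps `X = ∏ X i` into itself. -/
structure FDS (V : Type) where
  X : V → Finset ℤ
  nonempty : ∀ i, (X i).Nonempty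
  interval : ∀ i, ∀ a ∈ X i, ∀ b ∈ X i, ∀ c : ℤ, a ≤ c → c ≤ b → c ∈ X i
  f : (V → ℤ) → V → ℤ
  maps : ∀ x, (∀ i, x i ∈ X i) → ∀ i, f x i ∈ X i

namespace FDS

variable {V : Type}

/-- `x` is a state of the system, i.e. `x ∈ X`. -/
def mem (F : FDS V) (x : V → ℤ) : Prop := ∀ i, x i ∈ F.X i

/-- `G` is the interaction graph of `F`: there is a positive (negative) arc from
`j` to `i` iff increasing `x j` by one can strictly increase (decrease) `f _ i`. -/
def onGraph [DecidableEq V] (F : FDS V) (G : SDigraph V) : Prop :=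
  (∀ j i, G.pos j i = true ↔ ∃ x, F.mem x ∧ x j + 1 ∈ F.X j ∧
      F.f x i < F.f (Function.update x j (x j + 1)) i) ∧
  (∀ j i, G.neg j i = true ↔ ∃ x, F.mem x ∧ x j + 1 ∈ F.X j ∧
      F.f (Function.update x j (x j + 1)) i < F.f x i)

/-- `F` is degree-bounded with respect to `G`. -/
def degreeBounded [Fintype V] (F : FDS V) (G : SDigraph V) : Prop :=
  ∀ i, (G.outdeg i = 0 ∧ 0 < G.indeg i → (F.X i).card = 2) ∧
    (¬(G.outdeg i = 0 ∧ 0 < G.indeg i) → (F.X i).card ≤ G.outdeg i + 1)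

/-- Fixed points of `F`. -/
def IsFixed (F : FDS V) (x : V → ℤ) : Prop := F.mem x ∧ F.f x = x

/-- `F` is nilpotent: some iterate is constant on `X`. -/
def Nilpotent (F : FDS V) : Prop :=
  ∃ k : ℕ, 1 ≤ k ∧ ∃ c, ∀ x, F.mem x → F.f^[k] x = c

/-- `F` converges toward `H` in `k` steps:
`f^k(X) ⊆ h(Y) ⊆ Y ⊆ X` and `f = h` on `Y`. -/
def ConvergesToward (F H : FDS V) (k : ℕ) : Prop :=
  (∀ i, H.X i ⊆ F.X i) ∧
  (∀ x, F.mem x → ∃ y, H.mem y ∧ F.f^[k] x = H.f y) ∧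
  (∀ x, H.mem x → F.f x = H.f x)

end FDS


/-!
Every vertex `i` gets the levels `0, …, maxLevel i`, as many as degree-boundedness allows, and
moves between two levels `low i ≤ high i` according to a monotone Boolean gate applied to one
literal per in-arc: a threshold test `t ≤ x` or `x < t` for a single arc, a test `x = c` or
`x ≠ c` for a double arc. Such a system has interaction graph `G` as soon as each literal steps
exactly in the directions given by the signs of its arc and each in-arc can switch its gate.

The fixed points are indexed by `β : Fin k → Bool`. The vertices of the `l`-th cycle rest at two
adjacent levels and carry the bit `β l` around the cycle, flipped across negative arcs; this is
consistent because the cycle is positive. All other vertices rest at one level. Thresholds avoid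
the rest levels, so every literal of a side arc is constant on the fixed points, and the gate of a
vertex off the cycles is an `or` or an `and`, decided at rest by one in-literal of the right value.
That value is ours to choose unless the in-neighbour is a relay (a single out-arc, hence only two
levels); connectedness lets the forced values of relays be propagated from free ones. Counting
out-arcs shows that `maxLevel` leaves room for all levels and thresholds used.
-/

namespace SDigraph

variable {V : Type} (G : SDigraph V)

def IsPair (z w : V) : Prop := G.pos z w = true ∧ G.neg z w = true

def arcMult (z w : V) : ℕ :=
  (if G.pos z w = true then 1 else 0) + (if G.neg z w = true then 1 else 0)

noncomputable def outNeg (z : V) : Bool := decide (∃ i, G.neg z i = true)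

variable {G}

lemma one_le_arcMult {z w : V} (h : G.arc z w) : 1 ≤ G.arcMult z w := by
  unfold arcMult; rcases h with h | h <;> simp [h]

lemma arcMult_eq_two {z w : V} (h : G.IsPair z w) : G.arcMult z w = 2 := by
  simp [arcMult, h.1, h.2]

lemma neg_eq_not_pos {z w : V} (h : G.arc z w) (hp : ¬ G.IsPair z w) : G.neg z w = !G.pos z w := by
  rcases h with h | h <;> simp_all [IsPair]

variable (G) [Fintype V]

/-- The largest level allowed at `i` by degree-boundedness, levels starting at `0`. -/
def maxLevel (i : V) : ℕ :=
  if G.outdeg i = 0 then (if G.indeg i = 0 then 0 else 1) else G.outdeg i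

lemma outdeg_eq_sum_arcMult (z : V) : G.outdeg z = ∑ w, G.arcMult z w := by
  simp only [outdeg, arcMult, Finset.card_filter, Finset.sum_add_distrib]

lemma sum_arcMult_le_outdeg (z : V) (T : Finset V) : ∑ w ∈ T, G.arcMult z w ≤ G.outdeg z :=
  G.outdeg_eq_sum_arcMult z ▸ Finset.sum_le_sum_of_subset (Finset.subset_univ T)

variable {G}

lemma arcMult_add_arcMult_le_outdeg (z : V) {a b : V} (hab : a ≠ b) :
    G.arcMult z a + G.arcMult z b ≤ G.outdeg z := by
  simpa [Finset.sum_pair hab] using G.sum_arcMult_le_outdeg z {a, b}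

lemma arcMult_add_arcMult_add_arcMult_le_outdeg (z : V) {a b c : V} (hab : a ≠ b) (hac : a ≠ c)
    (hbc : b ≠ c) : G.arcMult z a + G.arcMult z b + G.arcMult z c ≤ G.outdeg z := by
  have := G.sum_arcMult_le_outdeg z {a, b, c}
  rw [Finset.sum_insert (by simp [hab, hac]), Finset.sum_pair hbc] at this
  omega

lemma outdeg_pos_of_arc {z w : V} (h : G.arc z w) : 0 < G.outdeg z := by
  have := G.sum_arcMult_le_outdeg z {w}
  rw [Finset.sum_singleton] at this
  have := one_le_arcMult h
  omega

lemma indeg_pos_of_arc {z w : V} (h : G.arc z w) : 0 < G.indeg w := by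
  unfold indeg
  rcases h with h | h
  · have : z ∈ Finset.univ.filter fun j => G.pos j w = true := by simp [h]
    have := Finset.card_pos.mpr ⟨z, this⟩; omega
  · have : z ∈ Finset.univ.filter fun j => G.neg j w = true := by simp [h]
    have := Finset.card_pos.mpr ⟨z, this⟩; omega

lemma exists_arc_of_indeg_pos {i : V} (h : 0 < G.indeg i) : ∃ z, G.arc z i := by
  unfold indeg at h
  by_cases hp : 0 < (Finset.univ.filter fun z => G.pos z i = true).card
  · obtain ⟨z, hz⟩ := Finset.card_pos.mp hp
    exact ⟨z, Or.inl (Finset.mem_filter.mp hz).2⟩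
  · obtain ⟨z, hz⟩ := Finset.card_pos.mp
      (show 0 < (Finset.univ.filter fun z => G.neg z i = true).card by omega)
    exact ⟨z, Or.inr (Finset.mem_filter.mp hz).2⟩

lemma eq_of_outdeg_eq_one {z w w' : V} (h : G.outdeg z = 1) (hw : G.arc z w) (hw' : G.arc z w') :
    w = w' := by
  by_contra hne
  have := G.sum_arcMult_le_outdeg z {w, w'}
  rw [Finset.sum_pair hne] at this
  have := one_le_arcMult hw
  have := one_le_arcMult hw'
  omega

lemma not_isPair_of_outdeg_eq_one {z w : V} (h : G.outdeg z = 1) : ¬ G.IsPair z w := by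
  intro hp
  have := G.sum_arcMult_le_outdeg z {w}
  rw [Finset.sum_singleton, arcMult_eq_two hp] at this
  omega

lemma outNeg_eq_of_outdeg_eq_one {z w : V} (h : G.outdeg z = 1) (hw : G.arc z w) :
    G.outNeg z = !G.pos z w := by
  unfold outNeg
  cases hp : G.pos z w
  · simpa using ⟨w, hw.resolve_left (by simp [hp])⟩
  · simp only [Bool.not_true, decide_eq_false_iff_not, not_exists, Bool.not_eq_true]
    intro i
    by_contra hi
    have hiw := G.eq_of_outdeg_eq_one h (Or.inr (by simpa using hi)) hw
    subst hiw
    exact G.not_isPair_of_outdeg_eq_one h ⟨hp, by simpa using hi⟩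

/-- By pigeonhole the chosen in-neighbours exhaust `N`. -/
lemma mem_of_arc_of_forall_exists_pred [DecidableEq V] {N : Finset V}
    (hN : ∀ j ∈ N, ∃ z ∈ N, G.arc z j ∧ G.outdeg z = 1) {z w : V} (hz : z ∈ N)
    (hzw : G.arc z w) : w ∈ N := by
  choose ψ hψN hψ using hN
  obtain ⟨j, hj, rfl⟩ := Finset.surj_on_of_inj_on_of_card_le ψ hψN
    (fun j₁ j₂ h₁ h₂ he => G.eq_of_outdeg_eq_one (hψ j₁ h₁).2 (hψ j₁ h₁).1 (he ▸ (hψ j₂ h₂).1))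
    le_rfl z hz
  rwa [← G.eq_of_outdeg_eq_one (hψ j hj).2 (hψ j hj).1 hzw]

lemma maxLevel_eq_outdeg {i : V} (h : 0 < G.outdeg i) : G.maxLevel i = G.outdeg i := by
  simp [maxLevel, h.ne']

lemma one_le_maxLevel_of_arc {z w : V} (h : G.arc z w) : 1 ≤ G.maxLevel z := by
  rw [maxLevel_eq_outdeg (outdeg_pos_of_arc h)]; exact outdeg_pos_of_arc h

lemma one_le_maxLevel_of_indeg_pos {i : V} (h : 0 < G.indeg i) : 1 ≤ G.maxLevel i := by
  unfold maxLevel; split_ifs <;> omega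

end SDigraph

lemma SDigraph.Connected.not_mem_of_arc_closed {V : Type} {G : SDigraph V} (hG : G.Connected)
    {N : Set V} (hN : ∀ a b, G.arc a b → (a ∈ N ↔ b ∈ N)) {c : V} (hc : c ∉ N) (j : V) :
    j ∉ N := by
  induction hG c j with
  | refl => exact hc
  | tail _ hab ih =>
    rcases hab with h | h
    · exact fun hb => ih ((hN _ _ h).mpr hb)
    · exact fun hb => ih ((hN _ _ h).mp hb)

section ArcLiterals

/-- `p` and `q` say whether the arc has a positive and a negative sign, `M` is the top level of
its tail. -/
def IsArcLiteral (p q : Bool) (M : ℕ) (ℓ : ℤ → Bool) : Prop :=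
  (q = false → Monotone ℓ) ∧ (p = false → Antitone ℓ) ∧
  (p = true → ∃ t : ℤ, 0 ≤ t ∧ t + 1 ≤ M ∧ ℓ t = false ∧ ℓ (t + 1) = true) ∧
  (q = true → ∃ t : ℤ, 0 ≤ t ∧ t + 1 ≤ M ∧ ℓ t = true ∧ ℓ (t + 1) = false)

lemma IsArcLiteral.exists_eq {p q : Bool} {M : ℕ} {ℓ : ℤ → Bool} (hℓ : IsArcLiteral p q M ℓ)
    (hpq : p = true ∨ q = true) (b : Bool) : ∃ y : ℤ, 0 ≤ y ∧ y ≤ M ∧ ℓ y = b := by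
  obtain ⟨t, h0, hM, hne⟩ : ∃ t : ℤ, 0 ≤ t ∧ t + 1 ≤ M ∧ ℓ t ≠ ℓ (t + 1) := by
    rcases hpq with h | h
    · obtain ⟨t, h0, hM, ht, ht'⟩ := hℓ.2.2.1 h
      exact ⟨t, h0, hM, by rw [ht, ht']; decide⟩
    · obtain ⟨t, h0, hM, ht, ht'⟩ := hℓ.2.2.2 h
      exact ⟨t, h0, hM, by rw [ht, ht']; decide⟩
  by_cases hb : ℓ t = b
  · exact ⟨t, h0, by omega, hb⟩
  · exact ⟨t + 1, by omega, hM, by cases b <;> cases h : ℓ t <;> simp_all⟩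

def stepLit (up : Bool) (t x : ℤ) : Bool := if up then decide (t ≤ x) else decide (x < t)

def spikeLit (p : Bool) (c x : ℤ) : Bool := xor p (decide (x = c))

lemma isArcLiteral_stepLit (up : Bool) {t : ℤ} {M : ℕ} (h1 : 1 ≤ t) (hM : t ≤ M) :
    IsArcLiteral up (!up) M (stepLit up t) := by
  refine ⟨fun h a b hab => ?_, fun h a b hab => ?_, fun h => ⟨t - 1, ?_⟩, fun h => ⟨t - 1, ?_⟩⟩ <;>
    cases up <;> simp_all [stepLit, Bool.le_iff_imp] <;> omega

lemma isArcLiteral_spikeLit (p : Bool) {c : ℤ} {M : ℕ} (h1 : 1 ≤ c) (hM : c + 1 ≤ M) :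
    IsArcLiteral true true M (spikeLit p c) := by
  refine ⟨by simp, by simp, fun _ => ?_, fun _ => ?_⟩ <;> cases p
  exacts [⟨c - 1, by simp [spikeLit]; omega⟩, ⟨c, by simp [spikeLit]; omega⟩,
    ⟨c, by simp [spikeLit]; omega⟩, ⟨c - 1, by simp [spikeLit]; omega⟩]

variable {V : Type}

def IsGate [DecidableEq V] (G : SDigraph V) (i : V) (φ : (V → Bool) → Bool) : Prop :=
  Monotone φ ∧ (∀ b b' : V → Bool, (∀ z, G.arc z i → b z = b' z) → φ b = φ b') ∧
  ∀ j, G.arc j i → ∃ b, φ (Function.update b j false) = false ∧ φ (Function.update b j true) = true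

lemma IsGate.le [DecidableEq V] {G : SDigraph V} {i : V} {φ : (V → Bool) → Bool}
    (hφ : IsGate G i φ) {b b' : V → Bool} (h : ∀ z, G.arc z i → b z ≤ b' z) : φ b ≤ φ b' := by
  classical
  rw [hφ.2.1 b (fun z => if G.arc z i then b z else b' z) fun z hz => by simp [hz]]
  exact hφ.1 fun z => by by_cases hz : G.arc z i <;> simp [hz, h]

noncomputable def literalFDS (M : V → ℕ) (u : V → V → ℤ → Bool) (Φ : V → (V → Bool) → Bool)
    (A B : V → ℕ) (hAB : ∀ i, A i ≤ B i) (hB : ∀ i, B i ≤ M i) : FDS V where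
  X i := Finset.Icc 0 (M i : ℤ)
  nonempty i := ⟨0, by simp⟩
  interval i a ha b hb c hac hcb := by simp only [Finset.mem_Icc] at *; omega
  f x i := if Φ i (fun z => u z i (x z)) then B i else A i
  maps x _ i := by
    have := hAB i
    have := hB i
    split <;> simp only [Finset.mem_Icc] <;> omega

variable {M : V → ℕ} {u : V → V → ℤ → Bool} {Φ : V → (V → Bool) → Bool} {A B : V → ℕ}
  {hAB : ∀ i, A i ≤ B i} {hB : ∀ i, B i ≤ M i}

theorem literalFDS_degreeBounded [Fintype V] (G : SDigraph V) {hB : ∀ i, B i ≤ G.maxLevel i} :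
    (literalFDS G.maxLevel u Φ A B hAB hB).degreeBounded G := by
  intro i
  have hcard : ((literalFDS G.maxLevel u Φ A B hAB hB).X i).card = G.maxLevel i + 1 := by
    simp [literalFDS]
  rw [hcard, SDigraph.maxLevel]
  constructor
  · rintro ⟨h1, h2⟩
    simp [h1, h2.ne']
  · intro h
    split_ifs <;> omega

variable [DecidableEq V] {G : SDigraph V}

lemma literalFDS_f_le {i : V} (hΦ : IsGate G i (Φ i)) {x y : V → ℤ}
    (h : ∀ z, G.arc z i → u z i (x z) ≤ u z i (y z)) :
    (literalFDS M u Φ A B hAB hB).f x i ≤ (literalFDS M u Φ A B hAB hB).f y i := by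
  have hle := hΦ.le h
  have := hAB i
  simp only [literalFDS]
  revert hle
  cases Φ i (fun z => u z i (x z)) <;> cases Φ i (fun z => u z i (y z)) <;> simp [this]

lemma literalFDS_f_update_le {i j : V} (hΦ : IsGate G i (Φ i))
    (hu : G.arc j i → Antitone (u j i)) (x : V → ℤ) :
    (literalFDS M u Φ A B hAB hB).f (Function.update x j (x j + 1)) i ≤
      (literalFDS M u Φ A B hAB hB).f x i := by
  refine literalFDS_f_le hΦ fun z hz => ?_
  by_cases hzj : z = j
  · subst hzj
    simpa using hu hz (by omega : x z ≤ x z + 1)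
  · simp [Function.update_of_ne hzj]

lemma literalFDS_f_le_update {i j : V} (hΦ : IsGate G i (Φ i))
    (hu : G.arc j i → Monotone (u j i)) (x : V → ℤ) :
    (literalFDS M u Φ A B hAB hB).f x i ≤
      (literalFDS M u Φ A B hAB hB).f (Function.update x j (x j + 1)) i := by
  refine literalFDS_f_le hΦ fun z hz => ?_
  by_cases hzj : z = j
  · subst hzj
    simpa using hu hz (by omega : x z ≤ x z + 1)
  · simp [Function.update_of_ne hzj]

/-- The other in-neighbours of `i` can be placed so that the gate of `i` reads off the literal
of `j`; then moving `j` from `t` to `t + 1` moves `i` as the literal does. -/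
lemma literalFDS_exists_step
    (hu : ∀ z i, G.arc z i → IsArcLiteral (G.pos z i) (G.neg z i) (M z) (u z i))
    {i j : V} (hΦ : IsGate G i (Φ i)) (hji : G.arc j i) {t : ℤ} (h0 : 0 ≤ t) (hM : t + 1 ≤ M j) :
    ∃ x, (literalFDS M u Φ A B hAB hB).mem x ∧ x j + 1 ∈ (literalFDS M u Φ A B hAB hB).X j ∧
      (literalFDS M u Φ A B hAB hB).f x i = (if u j i t then B i else A i) ∧
      (literalFDS M u Φ A B hAB hB).f (Function.update x j (x j + 1)) i =
        (if u j i (t + 1) then B i else A i) := by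
  obtain ⟨b, hb0, hb1⟩ := hΦ.2.2 j hji
  have hattain : ∀ z, G.arc z i → ∃ y : ℤ, 0 ≤ y ∧ y ≤ M z ∧ u z i y = b z := fun z hz =>
    (hu z i hz).exists_eq (by rcases hz with h | h <;> simp [h]) (b z)
  choose y hy0 hyM hyb using hattain
  set x₀ : V → ℤ := fun z => if hz : G.arc z i then y z hz else 0
  have hread : ∀ s : ℤ, (literalFDS M u Φ A B hAB hB).f (Function.update x₀ j s) i =
      if u j i s then B i else A i := by
    intro s
    have : Φ i (fun z => u z i (Function.update x₀ j s z)) =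
        Φ i (Function.update b j (u j i s)) := by
      refine hΦ.2.1 _ _ fun z hz => ?_
      by_cases hzj : z = j
      · subst hzj; simp
      · simp [x₀, Function.update_of_ne hzj, hz, hyb]
    simp only [literalFDS, this]
    cases u j i s <;> simp [hb0, hb1]
  refine ⟨Function.update x₀ j t, fun z => ?_, ?_, hread t, by simpa using hread (t + 1)⟩
  · by_cases hzj : z = j
    · subst hzj
      simp only [literalFDS, Function.update_self, Finset.mem_Icc, h0, true_and]
      omega
    · by_cases hz : G.arc z i <;> simp [literalFDS, x₀, Function.update_of_ne hzj, hz, hy0, hyM]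
  · simp only [literalFDS, Function.update_self, Finset.mem_Icc]
    omega

theorem literalFDS_onGraph
    (hu : ∀ z i, G.arc z i → IsArcLiteral (G.pos z i) (G.neg z i) (M z) (u z i))
    (hΦ : ∀ i, IsGate G i (Φ i)) (hlt : ∀ j i, G.arc j i → A i < B i) :
    (literalFDS M u Φ A B hAB hB).onGraph G := by
  refine ⟨fun j i => ⟨fun hp => ?_, fun ⟨x, _, _, hx⟩ => ?_⟩,
    fun j i => ⟨fun hn => ?_, fun ⟨x, _, _, hx⟩ => ?_⟩⟩
  · obtain ⟨t, h0, hM, ht, ht'⟩ := (hu j i (.inl hp)).2.2.1 hp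
    obtain ⟨x, hx, hx1, hf, hf'⟩ := literalFDS_exists_step hu (hΦ i) (.inl hp) h0 hM
    exact ⟨x, hx, hx1, by simpa [hf, hf', ht, ht'] using hlt j i (.inl hp)⟩
  · by_contra hp
    exact (literalFDS_f_update_le (hΦ i)
      (fun h => (hu j i h).2.1 (by simpa using hp)) x).not_gt hx
  · obtain ⟨t, h0, hM, ht, ht'⟩ := (hu j i (.inr hn)).2.2.2 hn
    obtain ⟨x, hx, hx1, hf, hf'⟩ := literalFDS_exists_step hu (hΦ i) (.inr hn) h0 hM
    exact ⟨x, hx, hx1, by simpa [hf, hf', ht, ht'] using hlt j i (.inr hn)⟩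
  · by_contra hn
    exact (literalFDS_f_le_update (hΦ i)
      (fun h => (hu j i h).1 (by simpa using hn)) x).not_gt hx

end ArcLiterals

section Labelling

variable {V : Type} (R : V → V → Prop) (B : V → Prop)

def ReachWithin : ℕ → V → Prop
  | 0 => B
  | q + 1 => fun i => ReachWithin q i ∨ ∃ z, R z i ∧ ReachWithin q z

lemma exists_reachWithin {b i : V} (hb : B b) (h : Relation.ReflTransGen R b i) :
    ∃ q, ReachWithin R B q i := by
  induction h with
  | refl => exact ⟨0, hb⟩
  | tail _ hzi ih =>
    obtain ⟨q, hq⟩ := ih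
    exact ⟨q + 1, Or.inr ⟨_, hzi, hq⟩⟩

lemma exists_height (h : ∀ i, ∃ b, B b ∧ Relation.ReflTransGen R b i) :
    ∃ ht : V → ℕ, ∀ i, ¬ B i → ∃ z, R z i ∧ ht z < ht i := by
  classical
  have hex : ∀ i, ∃ q, ReachWithin R B q i := fun i => by
    obtain ⟨b, hb, hbi⟩ := h i
    exact exists_reachWithin R B hb hbi
  refine ⟨fun i => Nat.find (hex i), fun i hi => ?_⟩
  obtain ⟨q, hq⟩ : ∃ q, Nat.find (hex i) = q + 1 := by
    refine Nat.exists_eq_succ_of_ne_zero fun h0 => hi ?_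
    have := Nat.find_spec (hex i)
    rwa [h0] at this
  have hspec := Nat.find_spec (hex i)
  rw [hq] at hspec
  rcases hspec with hqi | ⟨z, hz, hzq⟩
  · exact absurd hqi (Nat.find_min (hex i) (by omega))
  · exact ⟨z, hz, (Nat.find_le hzq).trans_lt (by simp only [hq]; omega)⟩

theorem exists_labelling_of_reach (h : ∀ i, ∃ b, B b ∧ Relation.ReflTransGen R b i)
    (g : V → Bool → Bool) : ∃ φ : V → Bool, ∀ i, ¬ B i → ∃ z, R z i ∧ φ i = g z (φ z) := by
  classical
  obtain ⟨ht, hht⟩ := exists_height R B h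
  choose pr hpr hlt using hht
  let φ : V → Bool := (measure ht).wf.fix fun i rec =>
    if hi : B i then false else g (pr i hi) (rec (pr i hi) (hlt i hi))
  refine ⟨φ, fun i hi => ⟨pr i hi, hpr i hi, ?_⟩⟩
  rw [show φ i = _ from (measure ht).wf.fix_eq _ i]
  simp [hi, φ]

end Labelling

lemma card_filter_val_lt_succ {m : ℕ} (P : Fin (m + 1) → Prop) [DecidablePred P]
    (a : Fin (m + 1)) :
    (Finset.univ.filter fun t : Fin (m + 1) => (t : ℕ) < a + 1 ∧ P t).card =
      (Finset.univ.filter fun t : Fin (m + 1) => (t : ℕ) < a ∧ P t).card +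
        if P a then 1 else 0 := by
  have hsingle := Finset.sum_ite_eq Finset.univ a (fun t => if P t then 1 else 0)
  simp only [Finset.mem_univ, if_true] at hsingle
  simp only [Finset.card_filter]
  rw [← hsingle, ← Finset.sum_add_distrib]
  refine Finset.sum_congr rfl fun t _ => ?_
  by_cases hat : a = t
  · subst hat; split_ifs <;> simp_all
  · have : (t : ℕ) ≠ a := fun h => hat (Fin.ext h.symm)
    split_ifs <;> simp_all <;> omega

theorem exists_sign_potential {m : ℕ} (s : Fin (m + 1) → Bool)
    (hs : SDigraph.negCount s % 2 = 0) :
    ∃ ε : Fin (m + 1) → Bool, ∀ a, ε (a + 1) = xor (ε a) (!s a) := by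
  let c : Fin (m + 1) → ℕ := fun a =>
    (Finset.univ.filter fun t : Fin (m + 1) => (t : ℕ) < a ∧ s t = false).card
  have hstep : ∀ a, c (a + 1) % 2 = (c a + if s a = false then 1 else 0) % 2 := by
    intro a
    simp only [c]
    rw [← card_filter_val_lt_succ]
    by_cases ha : a < Fin.last m
    · rw [Fin.val_add_one_of_lt ha]
    · obtain rfl : a = Fin.last m := le_antisymm a.le_last (not_lt.mp ha)
      have hall : (Finset.univ.filter fun t : Fin (m + 1) => (t : ℕ) < (Fin.last m : ℕ) + 1 ∧
          s t = false) = Finset.univ.filter fun t => s t = false := by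
        ext t; simp [Fin.is_le]
      rw [hall, Fin.last_add_one]
      simpa [SDigraph.negCount] using hs.symm
  refine ⟨fun a => decide (c a % 2 = 1), fun a => ?_⟩
  have := hstep a
  cases hsa : s a <;> simp only [hsa] at this
  · simp only [Bool.not_false, Bool.xor_true, if_true] at this ⊢
    rw [Bool.eq_not_iff]; simp only [ne_eq, decide_eq_decide]; omega
  · simp only [Bool.not_true, Bool.xor_false, decide_eq_decide, Bool.true_eq_false,
      if_false, add_zero] at this ⊢
    omega

structure CyclePacking (V : Type) (k : ℕ) where
  G : SDigraph V
  m : Fin k → ℕ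
  v : ∀ l, Fin (m l + 1) → V
  s : ∀ l, Fin (m l + 1) → Bool
  connected : G.Connected
  pos_k : 0 < k
  isCycle : ∀ l, G.IsSignedCycleOn (m l) (v l) (s l)
  positive : ∀ l, SDigraph.negCount (s l) % 2 = 0
  disjoint : ∀ l l', l ≠ l' → ∀ t t', v l t ≠ v l' t'

namespace CyclePacking

variable {V : Type} {k : ℕ} (S : CyclePacking V k)

def OnCycle (x : V) : Prop := ∃ l a, S.v l a = x

lemma sigma_eq_of_v_eq {l l' : Fin k} {a : Fin (S.m l + 1)} {a' : Fin (S.m l' + 1)}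
    (h : S.v l a = S.v l' a') : (⟨l, a⟩ : Σ l, Fin (S.m l + 1)) = ⟨l', a'⟩ := by
  obtain rfl : l = l' := by_contra fun hne => S.disjoint l l' hne a a' h
  rw [(S.isCycle l).1 h]

/-- Position of a vertex on the cycles (junk off the cycles). -/
noncomputable def coord (x : V) : Σ l, Fin (S.m l + 1) :=
  if h : S.OnCycle x then ⟨h.choose, h.choose_spec.choose⟩ else ⟨⟨0, S.pos_k⟩, 0⟩

lemma coord_v (l : Fin k) (a : Fin (S.m l + 1)) : S.coord (S.v l a) = ⟨l, a⟩ := by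
  have h : S.OnCycle (S.v l a) := ⟨l, a, rfl⟩
  rw [coord, dif_pos h]
  exact S.sigma_eq_of_v_eq h.choose_spec.choose_spec

noncomputable def pred (x : V) : V := S.v (S.coord x).1 ((S.coord x).2 - 1)

noncomputable def succ (x : V) : V := S.v (S.coord x).1 ((S.coord x).2 + 1)

noncomputable def inSign (x : V) : Bool := S.s (S.coord x).1 ((S.coord x).2 - 1)

lemma pred_v (l : Fin k) (a : Fin (S.m l + 1)) : S.pred (S.v l a) = S.v l (a - 1) :=
  congrArg (fun p : Σ l, Fin (S.m l + 1) => S.v p.1 (p.2 - 1)) (S.coord_v l a)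

lemma succ_v (l : Fin k) (a : Fin (S.m l + 1)) : S.succ (S.v l a) = S.v l (a + 1) :=
  congrArg (fun p : Σ l, Fin (S.m l + 1) => S.v p.1 (p.2 + 1)) (S.coord_v l a)

lemma inSign_v (l : Fin k) (a : Fin (S.m l + 1)) : S.inSign (S.v l a) = S.s l (a - 1) :=
  congrArg (fun p : Σ l, Fin (S.m l + 1) => S.s p.1 (p.2 - 1)) (S.coord_v l a)

lemma onCycle_pred (x : V) : S.OnCycle (S.pred x) := ⟨_, _, rfl⟩

lemma pred_succ {x : V} (h : S.OnCycle x) : S.pred (S.succ x) = x := by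
  obtain ⟨l, a, rfl⟩ := h
  rw [succ_v, pred_v, add_sub_cancel_right]

lemma succ_pred {x : V} (h : S.OnCycle x) : S.succ (S.pred x) = x := by
  obtain ⟨l, a, rfl⟩ := h
  rw [pred_v, succ_v, sub_add_cancel]

lemma cycleArc_sign {w : V} (h : S.OnCycle w) :
    if S.inSign w then S.G.pos (S.pred w) w = true else S.G.neg (S.pred w) w = true := by
  obtain ⟨l, a, rfl⟩ := h
  simpa [pred_v, inSign_v] using (S.isCycle l).2 (a - 1)

lemma arc_pred {w : V} (h : S.OnCycle w) : S.G.arc (S.pred w) w := by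
  have := S.cycleArc_sign h
  split at this
  exacts [Or.inl this, Or.inr this]

lemma arc_succ {x : V} (h : S.OnCycle x) : S.G.arc x (S.succ x) := by
  simpa [S.pred_succ h] using S.arc_pred (w := S.succ x) ⟨_, _, rfl⟩

lemma inSign_eq_pos {w : V} (h : S.OnCycle w) (hp : ¬ S.G.IsPair (S.pred w) w) :
    S.inSign w = S.G.pos (S.pred w) w := by
  have := S.cycleArc_sign h
  cases hs : S.inSign w <;> simp only [hs] at this ⊢
  · cases hp' : S.G.pos (S.pred w) w
    · rfl
    · exact absurd ⟨hp', this⟩ hp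
  · exact this.symm

def CycleArc (z w : V) : Prop := S.OnCycle w ∧ z = S.pred w

def SideArc (z w : V) : Prop := S.G.arc z w ∧ ¬ S.CycleArc z w

lemma sideArc_of_not_onCycle {z w : V} (hw : ¬ S.OnCycle w) (h : S.G.arc z w) : S.SideArc z w :=
  ⟨h, fun hc => hw hc.1⟩

lemma ne_succ_of_sideArc {z w : V} (hz : S.OnCycle z) (h : S.SideArc z w) : w ≠ S.succ z := by
  rintro rfl
  exact h.2 ⟨⟨_, _, rfl⟩, (S.pred_succ hz).symm⟩

noncomputable def potential (l : Fin k) : Fin (S.m l + 1) → Bool :=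
  (exists_sign_potential (S.s l) (S.positive l)).choose

lemma potential_add_one (l : Fin k) (a : Fin (S.m l + 1)) :
    S.potential l (a + 1) = xor (S.potential l a) (!S.s l a) :=
  (exists_sign_potential (S.s l) (S.positive l)).choose_spec a

/-- The bit of a cycle vertex at the fixed point indexed by `β`; `β l` switches the `l`-th cycle
as a whole. -/
noncomputable def toggle (β : Fin k → Bool) (x : V) : Bool :=
  xor (β (S.coord x).1) (S.potential (S.coord x).1 (S.coord x).2)

lemma toggle_v (β : Fin k → Bool) (l : Fin k) (a : Fin (S.m l + 1)) :
    S.toggle β (S.v l a) = xor (β l) (S.potential l a) := by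
  exact congrArg (fun p : Σ l, Fin (S.m l + 1) => xor (β p.1) (S.potential p.1 p.2)) (S.coord_v l a)

lemma toggle_eq {w : V} (β : Fin k → Bool) (h : S.OnCycle w) :
    S.toggle β w = xor (S.toggle β (S.pred w)) (!S.inSign w) := by
  obtain ⟨l, a, rfl⟩ := h
  rw [pred_v, inSign_v, toggle_v, toggle_v]
  conv_lhs => rw [← sub_add_cancel a 1, potential_add_one]
  rw [Bool.xor_assoc]

lemma eq_of_toggle_eq {β β' : Fin k → Bool}
    (h : ∀ x, S.OnCycle x → S.toggle β x = S.toggle β' x) : β = β' := by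
  funext l
  simpa [toggle_v] using h (S.v l 0) ⟨l, 0, rfl⟩

variable [Fintype V]

/-- A vertex off the cycles with a single outgoing arc and some incoming one: it has only two
levels, so its level at a fixed point decides the value of its only literal. -/
def IsRelay (z : V) : Prop := ¬ S.OnCycle z ∧ 0 < S.G.indeg z ∧ S.G.outdeg z = 1

def RelayFed (j : V) : Prop :=
  ¬ S.OnCycle j ∧ 0 < S.G.indeg j ∧ ∀ z, S.G.arc z j → S.IsRelay z

/-- Otherwise the unreached vertices would all be relay-fed relays, so (pigeonhole) no arc would
enter or leave them, and they would form components avoiding the cycles. -/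
theorem reach_of_not_relayFed (i : V) :
    ∃ b, ¬ S.RelayFed b ∧ Relation.ReflTransGen (fun z j => S.G.arc z j ∧ S.IsRelay z) b i := by
  classical
  by_contra hi
  set N := Finset.univ.filter fun j =>
    ¬ ∃ b, ¬ S.RelayFed b ∧ Relation.ReflTransGen (fun z j => S.G.arc z j ∧ S.IsRelay z) b j
  have hfed : ∀ j ∈ N, S.RelayFed j := fun j hj =>
    by_contra fun h => (Finset.mem_filter.mp hj).2 ⟨j, h, .refl⟩
  have hin : ∀ j ∈ N, ∀ z, S.G.arc z j → z ∈ N := by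
    intro j hj z hz
    simp only [N, Finset.mem_filter, Finset.mem_univ, true_and] at hj ⊢
    rintro ⟨b, hb, hbz⟩
    exact hj ⟨b, hb, hbz.tail ⟨hz, (hfed j (by simpa [N] using hj)).2.2 z hz⟩⟩
  have hout : ∀ z ∈ N, ∀ w, S.G.arc z w → w ∈ N := fun z hz w hw =>
    S.G.mem_of_arc_of_forall_exists_pred (fun j hj => by
      obtain ⟨z, hz⟩ := S.G.exists_arc_of_indeg_pos (hfed j hj).2.1
      exact ⟨z, hin j hj z hz, hz, ((hfed j hj).2.2 z hz).2.2⟩) hz hw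
  have hc : S.v ⟨0, S.pos_k⟩ 0 ∉ (N : Set V) := fun h => (hfed _ h).1 ⟨_, _, rfl⟩
  exact S.connected.not_mem_of_arc_closed (N := (N : Set V))
    (fun a b hab => ⟨fun ha => hout a ha b hab, fun hb => hin b hb a hab⟩) hc i
    (by simpa [N] using hi)

/-- The value of its gate at the fixed points, for a vertex off the cycles. -/
noncomputable def phi : V → Bool :=
  (exists_labelling_of_reach _ _ S.reach_of_not_relayFed fun z b => xor b (S.G.outNeg z)).choose

lemma exists_relay_phi {i : V} (h : S.RelayFed i) :
    ∃ z, S.G.arc z i ∧ S.IsRelay z ∧ S.phi i = xor (S.phi z) (S.G.outNeg z) := by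
  obtain ⟨z, ⟨hz, hr⟩, he⟩ := (exists_labelling_of_reach _ _ S.reach_of_not_relayFed
    fun z b => xor b (S.G.outNeg z)).choose_spec i (not_not.mpr h)
  exact ⟨z, hz, hr, he⟩

/-- The value of the literal of the arc `z → i` at the fixed points. -/
noncomputable def restLit (z i : V) : Bool :=
  if S.IsRelay z then xor (S.phi z) (S.G.outNeg z) else S.phi i

lemma exists_restLit_eq_phi {i : V} (hC : ¬ S.OnCycle i) (hi : 0 < S.G.indeg i) :
    ∃ z, S.G.arc z i ∧ S.restLit z i = S.phi i := by
  by_cases hfed : S.RelayFed i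
  · obtain ⟨z, hz, hr, he⟩ := S.exists_relay_phi hfed
    exact ⟨z, hz, by rw [restLit, if_pos hr, he]⟩
  · obtain ⟨z, hz, hr⟩ : ∃ z, S.G.arc z i ∧ ¬ S.IsRelay z := by
      by_contra! h
      exact hfed ⟨hC, hi, h⟩
    exact ⟨z, hz, by rw [restLit, if_neg hr]⟩

/-- `z` must rest at a level `≥ 1`: its own gate is on at rest, or one of its single side
arcs is `t ≤ x` with value true, or `x < t` with value false. -/
def NeedLo (z : V) : Prop :=
  (¬ S.OnCycle z ∧ 0 < S.G.indeg z ∧ S.phi z = true) ∨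
    ∃ w, S.SideArc z w ∧ ¬ S.G.IsPair z w ∧ S.restLit z w = S.G.pos z w

/-- `z` must rest strictly below its top level. -/
def NeedHi (z : V) : Prop :=
  (¬ S.OnCycle z ∧ 0 < S.G.indeg z ∧ S.phi z = false) ∨
    ∃ w, S.SideArc z w ∧ ¬ S.G.IsPair z w ∧ S.restLit z w = S.G.neg z w

variable {S}

lemma IsRelay.phi_of_needLo {z : V} (hz : S.IsRelay z) (h : S.NeedLo z) : S.phi z = true := by
  rcases h with ⟨-, -, h⟩ | ⟨w, hw, -, h⟩
  · exact h
  · rw [restLit, if_pos hz, S.G.outNeg_eq_of_outdeg_eq_one hz.2.2 hw.1] at h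
    cases hp : S.G.pos z w <;> simp_all

lemma IsRelay.phi_of_needHi {z : V} (hz : S.IsRelay z) (h : S.NeedHi z) : S.phi z = false := by
  rcases h with ⟨-, -, h⟩ | ⟨w, hw, hpair, h⟩
  · exact h
  · rw [restLit, if_pos hz, S.G.outNeg_eq_of_outdeg_eq_one hz.2.2 hw.1] at h
    have hw1 := hw.1
    cases hp : S.G.pos z w <;> cases hn : S.G.neg z w <;> simp_all [SDigraph.arc, SDigraph.IsPair]

variable (S)

noncomputable def rest (z : V) : ℕ :=
  if S.NeedHi z then (if S.NeedLo z then 1 else 0) else (if S.NeedLo z then S.G.maxLevel z else 0)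

/-- A cycle vertex rests at `base z` or `base z + 1`. -/
noncomputable def base (z : V) : ℕ := if S.NeedLo z ∨ S.G.IsPair z (S.succ z) then 1 else 0

noncomputable def restLo (z : V) : ℕ := if S.OnCycle z then S.base z else S.rest z

noncomputable def restHi (z : V) : ℕ := if S.OnCycle z then S.base z + 1 else S.rest z

/-- The level singled out by the literals of the double side arcs of `z`. -/
noncomputable def spikeAt (z : V) : ℕ :=
  if S.OnCycle z then S.base z + 2 else if S.rest z = 1 then 2 else 1

variable {S}

lemma ne_of_restLit {z w w' : V} (hw : S.G.arc z w) (hp : ¬ S.G.IsPair z w)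
    (h : S.restLit z w = S.G.pos z w) (h' : S.restLit z w' = S.G.neg z w') : w ≠ w' := by
  rintro rfl
  rcases hw with hw | hw <;> simp_all [SDigraph.IsPair]

lemma one_le_maxLevel {z : V} (h : S.NeedLo z ∨ S.NeedHi z) : 1 ≤ S.G.maxLevel z := by
  rcases h with (⟨-, h, -⟩ | ⟨w, hw, -⟩) | (⟨-, h, -⟩ | ⟨w, hw, -⟩)
  all_goals first
    | exact SDigraph.one_le_maxLevel_of_indeg_pos h
    | exact SDigraph.one_le_maxLevel_of_arc hw.1

lemma two_le_maxLevel {z : V} (hC : ¬ S.OnCycle z) (hlo : S.NeedLo z) (hhi : S.NeedHi z) :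
    2 ≤ S.G.maxLevel z := by
  have hnr : ¬ S.IsRelay z := fun hr => by
    have := hr.phi_of_needLo hlo
    simp [hr.phi_of_needHi hhi] at this
  suffices 2 ≤ S.G.outdeg z by rwa [SDigraph.maxLevel_eq_outdeg (by omega)]
  rcases hlo with ⟨-, hi, hφ⟩ | ⟨w, hw, hwp, hwl⟩ <;>
    rcases hhi with ⟨-, hi', hφ'⟩ | ⟨w', hw', -, hwh⟩
  · simp_all
  · have := SDigraph.outdeg_pos_of_arc hw'.1
    by_contra
    exact hnr ⟨hC, hi, by omega⟩
  · have := SDigraph.outdeg_pos_of_arc hw.1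
    by_contra
    exact hnr ⟨hC, hi', by omega⟩
  · have := S.G.arcMult_add_arcMult_le_outdeg z (ne_of_restLit hw.1 hwp hwl hwh)
    have := SDigraph.one_le_arcMult hw.1
    have := SDigraph.one_le_arcMult hw'.1
    omega

lemma rest_cases (z : V) : S.rest z = 0 ∨ S.rest z = 1 ∨ S.rest z = S.G.maxLevel z := by
  unfold rest; split_ifs <;> simp

lemma rest_le_maxLevel (z : V) : S.rest z ≤ S.G.maxLevel z := by
  unfold rest
  split_ifs with h1 h2 h2
  · exact one_le_maxLevel (Or.inr h1)
  all_goals simp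

lemma base_add_one_le_maxLevel {z : V} (hz : S.OnCycle z) : S.base z + 1 ≤ S.G.maxLevel z := by
  have hs := S.arc_succ hz
  rw [SDigraph.maxLevel_eq_outdeg (SDigraph.outdeg_pos_of_arc hs)]
  unfold base
  split_ifs with h
  · rcases h with hlo | hpair
    · obtain ⟨w, hw, -⟩ := hlo.resolve_left fun h => h.1 hz
      have := S.G.arcMult_add_arcMult_le_outdeg z (S.ne_succ_of_sideArc hz hw).symm
      have := SDigraph.one_le_arcMult hs
      have := SDigraph.one_le_arcMult hw.1
      omega
    · simpa [SDigraph.arcMult_eq_two hpair] using S.G.sum_arcMult_le_outdeg z {S.succ z}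
  · exact SDigraph.outdeg_pos_of_arc hs

lemma base_add_two_le_maxLevel {z : V} (hz : S.OnCycle z) (hhi : S.NeedHi z) :
    S.base z + 2 ≤ S.G.maxLevel z := by
  have hs := S.arc_succ hz
  rw [SDigraph.maxLevel_eq_outdeg (SDigraph.outdeg_pos_of_arc hs)]
  obtain ⟨w', hw', -, hwh⟩ := hhi.resolve_left fun h => h.1 hz
  have hw's := S.ne_succ_of_sideArc hz hw'
  have := SDigraph.one_le_arcMult hs
  have := SDigraph.one_le_arcMult hw'.1
  have := S.G.arcMult_add_arcMult_le_outdeg z hw's.symm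
  unfold base
  split_ifs with h
  · rcases h with hlo | hpair
    · obtain ⟨w, hw, hwp, hwl⟩ := hlo.resolve_left fun h => h.1 hz
      have := S.G.arcMult_add_arcMult_add_arcMult_le_outdeg z (S.ne_succ_of_sideArc hz hw).symm
        hw's.symm (ne_of_restLit hw.1 hwp hwl hwh)
      have := SDigraph.one_le_arcMult hw.1
      omega
    · have := SDigraph.arcMult_eq_two hpair
      omega
  · omega

lemma one_le_restLo {z : V} (h : S.NeedLo z) : 1 ≤ S.restLo z := by
  unfold restLo rest base
  split_ifs <;> simp_all [one_le_maxLevel (Or.inl h)]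

lemma restHi_add_one_le_maxLevel {z : V} (h : S.NeedHi z) : S.restHi z + 1 ≤ S.G.maxLevel z := by
  by_cases hC : S.OnCycle z
  · have := base_add_two_le_maxLevel hC h
    simp only [restHi, if_pos hC]
    omega
  · simp only [restHi, rest, if_neg hC, if_pos h]
    split_ifs with hlo
    · exact two_le_maxLevel hC hlo h
    · exact one_le_maxLevel (Or.inr h)

lemma restHi_le_maxLevel (z : V) : S.restHi z ≤ S.G.maxLevel z := by
  unfold restHi
  split_ifs with hC
  exacts [base_add_one_le_maxLevel hC, rest_le_maxLevel z]

lemma exists_single_sideArc {z : V} (hlo : S.NeedLo z) (hhi : S.NeedHi z) :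
    ∃ w, S.SideArc z w ∧ ¬ S.G.IsPair z w := by
  rcases hlo with ⟨-, -, hφ⟩ | ⟨w, hw, hwp, -⟩
  · rcases hhi with ⟨-, -, hφ'⟩ | ⟨w, hw, hwp, -⟩
    · simp_all
    · exact ⟨w, hw, hwp⟩
  · exact ⟨w, hw, hwp⟩

lemma needHi_and_needLo_of_rest_eq_one {z : V} (h : S.rest z = 1) (h2 : 2 ≤ S.G.maxLevel z) :
    S.NeedHi z ∧ S.NeedLo z := by
  unfold rest at h
  split_ifs at h with hhi hlo hlo
  · exact ⟨hhi, hlo⟩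
  all_goals omega

lemma spikeAt_add_one_le_outdeg_of_onCycle {z w : V} (hC : S.OnCycle z) (hw : S.SideArc z w)
    (hp : S.G.IsPair z w) : S.spikeAt z + 1 ≤ S.G.outdeg z := by
  have hs := S.arc_succ hC
  have hws := S.ne_succ_of_sideArc hC hw
  have := SDigraph.arcMult_eq_two hp
  have := SDigraph.one_le_arcMult hs
  have := S.G.arcMult_add_arcMult_le_outdeg z hws.symm
  simp only [spikeAt, if_pos hC, base]
  split_ifs with h
  · rcases h with hlo | hpair
    · obtain ⟨w₁, hw₁, hw₁p, -⟩ := hlo.resolve_left fun h => h.1 hC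
      have := S.G.arcMult_add_arcMult_add_arcMult_le_outdeg z hws.symm
        (S.ne_succ_of_sideArc hC hw₁).symm (fun h => hw₁p (h ▸ hp))
      have := SDigraph.one_le_arcMult hw₁.1
      omega
    · have := SDigraph.arcMult_eq_two hpair
      omega
  · omega

lemma spikeAt_bounds {z w : V} (hw : S.SideArc z w) (hp : S.G.IsPair z w) :
    1 ≤ S.spikeAt z ∧ S.spikeAt z + 1 ≤ S.G.maxLevel z ∧
      (S.spikeAt z < S.restLo z ∨ S.restHi z < S.spikeAt z) := by
  rw [SDigraph.maxLevel_eq_outdeg (SDigraph.outdeg_pos_of_arc hw.1)]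
  by_cases hC : S.OnCycle z
  · have := spikeAt_add_one_le_outdeg_of_onCycle hC hw hp
    simp only [spikeAt, restLo, restHi, if_pos hC] at this ⊢
    omega
  · have := S.G.sum_arcMult_le_outdeg z {w}
    rw [Finset.sum_singleton, SDigraph.arcMult_eq_two hp] at this
    simp only [spikeAt, restLo, restHi, if_neg hC]
    have hml := SDigraph.maxLevel_eq_outdeg (SDigraph.outdeg_pos_of_arc hw.1)
    split_ifs with hr
    · obtain ⟨hhi, hlo⟩ := needHi_and_needLo_of_rest_eq_one hr (by omega)
      obtain ⟨w₁, hw₁, hw₁p⟩ := exists_single_sideArc hlo hhi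
      have := S.G.arcMult_add_arcMult_le_outdeg z (fun h : w = w₁ => hw₁p (h ▸ hp))
      have := SDigraph.one_le_arcMult hw₁.1
      have := SDigraph.arcMult_eq_two hp
      omega
    · have := rest_cases (S := S) z
      omega

variable (S)

noncomputable def lit (z w : V) : ℤ → Bool :=
  if S.CycleArc z w then
    if S.G.IsPair z w then spikeLit (S.inSign w) (S.base z)
    else stepLit (S.G.pos z w) (S.base z + 1)
  else if S.G.IsPair z w then spikeLit (S.restLit z w) (S.spikeAt z)
  else stepLit (S.G.pos z w) (if S.restLit z w = S.G.pos z w then 1 else S.restHi z + 1)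

variable {S}

lemma isArcLiteral_lit {z w : V} (h : S.G.arc z w) :
    IsArcLiteral (S.G.pos z w) (S.G.neg z w) (S.G.maxLevel z) (S.lit z w) := by
  unfold lit
  by_cases hc : S.CycleArc z w
  · obtain ⟨hw, rfl⟩ := hc
    have hb := base_add_one_le_maxLevel (S.onCycle_pred w)
    rw [if_pos ⟨hw, rfl⟩]
    split_ifs with hp
    · have : S.base (S.pred w) = 1 := by simp [base, S.succ_pred hw, hp]
      rw [hp.1, hp.2]
      exact isArcLiteral_spikeLit _ (by omega) (by omega)
    · rw [SDigraph.neg_eq_not_pos h hp]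
      exact isArcLiteral_stepLit _ (by omega) (by omega)
  · rw [if_neg hc]
    split_ifs with hp hr
    · obtain ⟨h1, h2, -⟩ := spikeAt_bounds ⟨h, hc⟩ hp
      rw [hp.1, hp.2]
      exact isArcLiteral_spikeLit _ (by omega) (by omega)
    · rw [SDigraph.neg_eq_not_pos h hp]
      exact isArcLiteral_stepLit _ le_rfl (by exact_mod_cast SDigraph.one_le_maxLevel_of_arc h)
    · have hhi : S.NeedHi z := Or.inr ⟨w, ⟨h, hc⟩, hp, by
        rw [SDigraph.neg_eq_not_pos h hp]
        cases hrl : S.restLit z w <;> cases hpos : S.G.pos z w <;> simp_all⟩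
      have := restHi_add_one_le_maxLevel hhi
      rw [SDigraph.neg_eq_not_pos h hp]
      exact isArcLiteral_stepLit _ (by omega) (by omega)

lemma lit_of_sideArc {z w : V} (hw : S.SideArc z w) {x : ℤ} (h1 : S.restLo z ≤ x)
    (h2 : x ≤ S.restHi z) : S.lit z w x = S.restLit z w := by
  unfold lit
  rw [if_neg hw.2]
  split_ifs with hp hr
  · obtain ⟨-, -, hout⟩ := spikeAt_bounds hw hp
    have : x ≠ S.spikeAt z := by omega
    simp [spikeLit, this]
  · have := one_le_restLo (Or.inr ⟨w, hw, hp, hr⟩)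
    rw [hr]
    cases S.G.pos z w <;> simp [stepLit] <;> omega
  · have hx : x < (S.restHi z : ℤ) + 1 := by omega
    cases hpos : S.G.pos z w <;> cases hrl : S.restLit z w <;> simp_all [stepLit]

lemma lit_pred {w : V} (hw : S.OnCycle w) (b : Bool) :
    S.lit (S.pred w) w (S.base (S.pred w) + if b then 1 else 0) = xor (!S.inSign w) b := by
  unfold lit
  rw [if_pos ⟨hw, rfl⟩]
  by_cases hp : S.G.IsPair (S.pred w) w
  · rw [if_pos hp]
    cases S.inSign w <;> cases b <;> simp [spikeLit]
  · rw [if_neg hp, inSign_eq_pos S hw hp]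
    cases S.G.pos (S.pred w) w <;> cases b <;> simp [stepLit]

variable (S)

noncomputable def sideAny (i : V) (b : V → Bool) : Bool := decide (∃ z, S.SideArc z i ∧ b z = true)

noncomputable def sideAll (i : V) (b : V → Bool) : Bool := decide (∀ z, S.SideArc z i → b z = true)

/-- On a cycle vertex the side literals are combined by `&&` or `||` according to their value at
rest, so that at rest the gate just reads the cycle literal. -/
noncomputable def gate (i : V) (b : V → Bool) : Bool :=
  if S.OnCycle i then
    if S.sideAny i (S.restLit · i) then b (S.pred i) && S.sideAny i b
    else b (S.pred i) || S.sideAny i b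
  else if S.phi i then S.sideAny i b else S.sideAll i b

noncomputable def low (i : V) : ℕ :=
  if S.OnCycle i then S.base i
  else if 0 < S.G.indeg i ∧ S.phi i = true then 0 else S.rest i

noncomputable def high (i : V) : ℕ :=
  if S.OnCycle i then S.base i + 1
  else if 0 < S.G.indeg i ∧ S.phi i = false then S.G.maxLevel i else S.rest i

/-- The fixed point attached to `β`. -/
noncomputable def state (β : Fin k → Bool) (z : V) : ℤ :=
  if S.OnCycle z then S.base z + (if S.toggle β z then 1 else 0) else S.rest z

variable {S}

lemma sideAny_mono (i : V) : Monotone (S.sideAny i) := by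
  intro b b' h
  simp only [sideAny, Bool.le_iff_imp, decide_eq_true_eq]
  exact fun ⟨z, hz, hb⟩ => ⟨z, hz, Bool.le_iff_imp.mp (h z) hb⟩

lemma sideAll_mono (i : V) : Monotone (S.sideAll i) := by
  intro b b' h
  simp only [sideAll, Bool.le_iff_imp, decide_eq_true_eq]
  exact fun hb z hz => Bool.le_iff_imp.mp (h z) (hb z hz)

lemma sideAny_update_of_not_sideArc [DecidableEq V] {i j : V} (hj : ¬ S.SideArc j i)
    (b : V → Bool) (β : Bool) : S.sideAny i (Function.update b j β) = S.sideAny i b := by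
  simp only [sideAny, decide_eq_decide]
  refine exists_congr fun z => and_congr_right fun hz => ?_
  rw [Function.update_of_ne (by rintro rfl; exact hj hz)]

lemma sideAny_update_of_sideArc [DecidableEq V] {i j : V} (hj : S.SideArc j i) {b : V → Bool}
    (hb : ∀ z, S.SideArc z i → z ≠ j → b z = false) (β : Bool) :
    S.sideAny i (Function.update b j β) = β := by
  cases β
  · refine decide_eq_false fun ⟨z, hz, h⟩ => ?_
    by_cases hzj : z = j
    · simp [hzj] at h
    · simp [Function.update_of_ne hzj, hb z hz hzj] at h
  · exact decide_eq_true ⟨j, hj, by simp⟩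

lemma sideAll_update_of_sideArc [DecidableEq V] {i j : V} (hj : S.SideArc j i) {b : V → Bool}
    (hb : ∀ z, S.SideArc z i → z ≠ j → b z = true) (β : Bool) :
    S.sideAll i (Function.update b j β) = β := by
  cases β
  · exact decide_eq_false fun h => by simpa using h j hj
  · refine decide_eq_true fun z hz => ?_
    by_cases hzj : z = j
    · simp [hzj]
    · simp [Function.update_of_ne hzj, hb z hz hzj]

lemma gate_mono (i : V) : Monotone (S.gate i) := by
  intro b b' h
  have h1 := sideAny_mono (S := S) i h
  have h2 := sideAll_mono (S := S) i h
  have h3 := h (S.pred i)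
  simp only [gate]
  split_ifs <;> simp only [Bool.le_iff_imp, Bool.and_eq_true, Bool.or_eq_true] <;> tauto

lemma gate_congr {i : V} {b b' : V → Bool} (h : ∀ z, S.G.arc z i → b z = b' z) :
    S.gate i b = S.gate i b' := by
  have hside : ∀ z, S.SideArc z i → b z = b' z := fun z hz => h z hz.1
  have h1 : S.sideAny i b = S.sideAny i b' := by
    simp only [sideAny, decide_eq_decide]
    exact exists_congr fun z => and_congr_right fun hz => by rw [hside z hz]
  have h2 : S.sideAll i b = S.sideAll i b' := by
    simp only [sideAll, decide_eq_decide]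
    exact forall_congr' fun z => imp_congr_right fun hz => by rw [hside z hz]
  by_cases hC : S.OnCycle i
  · simp [gate, hC, h1, h (S.pred i) (S.arc_pred hC)]
  · simp [gate, hC, h1, h2]

lemma exists_gate_switch [DecidableEq V] {i j : V} (hj : S.G.arc j i) :
    ∃ b, S.gate i (Function.update b j false) = false ∧
      S.gate i (Function.update b j true) = true := by
  by_cases hC : S.OnCycle i
  · simp only [gate, if_pos hC]
    generalize hr : S.sideAny i (S.restLit · i) = r
    by_cases hjp : j = S.pred i
    · subst hjp
      have hr' : S.sideAny i (fun _ => r) = r := by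
        cases r
        · simp [sideAny]
        · obtain ⟨z, hz, -⟩ := of_decide_eq_true hr
          exact decide_eq_true ⟨z, hz, rfl⟩
      refine ⟨fun _ => r, ?_, ?_⟩ <;>
        simp only [Function.update_self, sideAny_update_of_not_sideArc (fun h => h.2 ⟨hC, rfl⟩),
          hr'] <;> cases r <;> rfl
    · have hj' : S.SideArc j i := ⟨hj, fun h => hjp h.2⟩
      have hb : ∀ z, S.SideArc z i → z ≠ j →
          Function.update (fun _ => false) (S.pred i) r z = false := fun z hz _ => by
        rw [Function.update_of_ne fun h => hz.2 ⟨hC, h⟩]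
      refine ⟨Function.update (fun _ => false) (S.pred i) r, ?_, ?_⟩ <;>
        rw [Function.update_of_ne (Ne.symm hjp), Function.update_self,
          sideAny_update_of_sideArc hj' hb] <;> cases r <;> rfl
  · have hj' := S.sideArc_of_not_onCycle hC hj
    cases hφ : S.phi i
    · refine ⟨fun _ => true, ?_, ?_⟩ <;>
        rw [gate, if_neg hC, hφ, if_neg Bool.false_ne_true,
          sideAll_update_of_sideArc hj' fun _ _ _ => rfl]
    · refine ⟨fun _ => false, ?_, ?_⟩ <;>
        rw [gate, if_neg hC, hφ, if_pos rfl, sideAny_update_of_sideArc hj' fun _ _ _ => rfl]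

lemma isGate_gate [DecidableEq V] (i : V) : IsGate S.G i (S.gate i) :=
  ⟨gate_mono i, fun _ _ => gate_congr, fun _ => exists_gate_switch⟩

lemma state_mem_rest (β : Fin k → Bool) (z : V) :
    S.restLo z ≤ S.state β z ∧ S.state β z ≤ S.restHi z := by
  unfold state restLo restHi
  split_ifs <;> simp

lemma gate_state_of_onCycle (β : Fin k → Bool) {i : V} (hC : S.OnCycle i) :
    S.gate i (fun z => S.lit z i (S.state β z)) = S.toggle β i := by
  have hside : S.sideAny i (fun z => S.lit z i (S.state β z)) = S.sideAny i (S.restLit · i) := by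
    simp only [sideAny, decide_eq_decide]
    exact exists_congr fun z => and_congr_right fun hz => by
      rw [lit_of_sideArc hz (S.state_mem_rest β z).1 (S.state_mem_rest β z).2]
  have hpred : S.lit (S.pred i) i (S.state β (S.pred i)) = S.toggle β i := by
    rw [state, if_pos (S.onCycle_pred i), lit_pred hC, S.toggle_eq β hC, Bool.xor_comm]
  simp only [gate, if_pos hC, hside, hpred]
  cases S.sideAny i (S.restLit · i) <;> simp

lemma gate_state_of_not_onCycle (β : Fin k → Bool) {i : V} (hC : ¬ S.OnCycle i)
    (hi : 0 < S.G.indeg i) : S.gate i (fun z => S.lit z i (S.state β z)) = S.phi i := by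
  obtain ⟨z, hz, hzφ⟩ := S.exists_restLit_eq_phi hC hi
  have hz' := S.sideArc_of_not_onCycle hC hz
  have hrest := lit_of_sideArc hz' (S.state_mem_rest β z).1 (S.state_mem_rest β z).2
  simp only [gate, if_neg hC]
  cases hφ : S.phi i
  · exact decide_eq_false fun h => by simp_all [h z hz']
  · exact decide_eq_true ⟨z, hz', by simp only [hrest, hzφ, hφ]⟩

lemma low_le_high (i : V) : S.low i ≤ S.high i := by
  have := rest_le_maxLevel (S := S) i
  unfold low high
  split_ifs <;> simp_all

lemma high_le_maxLevel (i : V) : S.high i ≤ S.G.maxLevel i := by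
  unfold high
  split_ifs with hC
  · exact base_add_one_le_maxLevel hC
  · exact le_rfl
  · exact rest_le_maxLevel i

lemma low_lt_high {j i : V} (h : S.G.arc j i) : S.low i < S.high i := by
  have hi := SDigraph.indeg_pos_of_arc h
  unfold low high
  by_cases hC : S.OnCycle i
  · simp [hC]
  · cases hφ : S.phi i
    · have := restHi_add_one_le_maxLevel (S := S) (Or.inl ⟨hC, hi, hφ⟩)
      simp only [restHi, if_neg hC] at this
      simp [hC, hi]
      omega
    · have := one_le_restLo (S := S) (Or.inl ⟨hC, hi, hφ⟩)
      simp only [restLo, if_neg hC] at this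
      simp [hC, hi]
      omega

variable (S)

noncomputable def fds : FDS V :=
  literalFDS S.G.maxLevel S.lit S.gate S.low S.high low_le_high high_le_maxLevel

lemma fds_onGraph [DecidableEq V] : S.fds.onGraph S.G :=
  literalFDS_onGraph (fun _ _ h => isArcLiteral_lit h) isGate_gate fun _ _ h => low_lt_high h

lemma fds_degreeBounded : S.fds.degreeBounded S.G := literalFDS_degreeBounded S.G

lemma isFixed_state (β : Fin k → Bool) : S.fds.IsFixed (S.state β) := by
  refine ⟨fun i => ?_, funext fun i => ?_⟩
  · have := S.state_mem_rest β i
    have := restHi_le_maxLevel (S := S) i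
    simp only [fds, literalFDS, Finset.mem_Icc]
    omega
  · show (if S.gate i _ then (S.high i : ℤ) else S.low i) = S.state β i
    by_cases hC : S.OnCycle i
    · rw [gate_state_of_onCycle β hC]
      cases hb : S.toggle β i <;> simp [state, low, high, hC, hb]
    · by_cases hi : 0 < S.G.indeg i
      · rw [gate_state_of_not_onCycle β hC hi]
        cases hφ : S.phi i <;> simp [state, low, high, hC, hi, hφ]
      · split_ifs <;> simp [state, low, high, hC, hi]

lemma state_injective : Function.Injective S.state := fun β β' h =>
  S.eq_of_toggle_eq fun x hx => by
    have := congrFun h x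
    simp only [state, if_pos hx, add_right_inj] at this
    cases hb : S.toggle β x <;> cases hb' : S.toggle β' x <;> simp_all

end CyclePacking

/-- If `G` is connected and contains `k ≥ 1` pairwise vertex-disjoint
positive cycles, then some degree-bounded FDS on `G` has at least `2^k` fixed points. -/
theorem stmt5 (n k : ℕ) (hk : 1 ≤ k) (G : SDigraph (Fin n)) (hconn : SDigraph.Connected G)
    (m : Fin k → ℕ) (v : ∀ l, Fin (m l + 1) → Fin n) (s : ∀ l, Fin (m l + 1) → Bool)
    (hcyc : ∀ l, SDigraph.IsSignedCycleOn G (m l) (v l) (s l))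
    (hpos : ∀ l, SDigraph.negCount (s l) % 2 = 0)
    (hdisj : ∀ l l', l ≠ l' → ∀ t t', v l t ≠ v l' t') :
    ∃ F : FDS (Fin n), F.onGraph G ∧ F.degreeBounded G ∧
      ∃ S : Finset (Fin n → ℤ), 2 ^ k ≤ S.card ∧ ∀ x ∈ S, F.IsFixed x := by
  let P : CyclePacking (Fin n) k := ⟨G, m, v, s, hconn, hk, hcyc, hpos, hdisj⟩
  refine ⟨P.fds, P.fds_onGraph, P.fds_degreeBounded, Finset.univ.image P.state, ?_, ?_⟩
  · rw [Finset.card_image_of_injective _ P.state_injective]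
    simp
  · simp only [Finset.mem_image]
    rintro _ ⟨β, -, rfl⟩
    exact P.isFixed_state β
end

section
/- Every Boolean network whose interaction graph is a signed cycle of positive sign has exactly two fixed points. -/
open scoped Classical

/-
Every vertex `i` has a unique in-neighbour `π i`, and `π` is a cyclic permutation. So `f_i`
depends on `x (π i)` alone, and the sign of the arc `π i → i` forces
`f_i x = x (π i) + ε i` over `ZMod 2`, where `ε i = 1` exactly when that arc is negative.
Fixed points are therefore the solutions of `x i - x (π i) = ε i`. The linear map
`x ↦ x - x ∘ π` has the constants as kernel, so its image is the hyperplane `∑ i, x i = 0`,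
which contains `ε` precisely because the cycle is positive. The solutions form a coset of the
constants: exactly two configurations.
-/

open Finset Function

namespace Equiv.Perm

variable {ι : Type*} {π : Perm ι}

theorem apply_eq_of_sameCycle [Finite ι] {α : Type*} {x : ι → α} (hx : ∀ i, x (π i) = x i)
    {a b : ι} (h : π.SameCycle a b) : x b = x a := by
  obtain ⟨k, rfl⟩ := h.exists_nat_pow_eq
  clear h
  induction k with
  | zero => rfl
  | succ k ih => rw [pow_succ', mul_apply, hx, ih]

theorem exists_sub_comp_eq_of_sum_eq_zero [Fintype ι] [Nonempty ι] {K : Type*} [Field K]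
    (hπ : ∀ a b, π.SameCycle a b) {ε : ι → K} (hε : ∑ i, ε i = 0) :
    ∃ x : ι → K, ∀ i, x i - x (π i) = ε i := by
  let D : (ι → K) →ₗ[K] ι → K := LinearMap.id - LinearMap.funLeft K K π
  let S : (ι → K) →ₗ[K] K := ∑ i, LinearMap.proj i
  have hDS : LinearMap.range D ≤ LinearMap.ker S := by
    rintro _ ⟨x, rfl⟩
    simp [D, S, sum_sub_distrib, Equiv.sum_comp]
  have hkerD : LinearMap.ker D ≤ K ∙ (1 : ι → K) := by
    intro x hx
    have hinv : ∀ i, x (π i) = x i := fun i =>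
      (sub_eq_zero.mp (by simpa [D] using congrFun hx i)).symm
    obtain ⟨i₀⟩ := ‹Nonempty ι›
    exact Submodule.mem_span_singleton.mpr
      ⟨x i₀, funext fun i => by simp [apply_eq_of_sameCycle hinv (hπ i₀ i)]⟩
  have hS : LinearMap.range S = ⊤ := by
    obtain ⟨i₀⟩ := ‹Nonempty ι›
    refine LinearMap.range_eq_top.mpr fun c => ⟨Pi.single i₀ c, ?_⟩
    simp [S]
  -- `range D` has codimension at most `1` and lies in the hyperplane `ker S`.
  have hrange : LinearMap.range D = LinearMap.ker S := by
    refine Submodule.eq_of_le_of_finrank_le hDS ?_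
    have hD := D.finrank_range_add_finrank_ker
    have hS' := S.finrank_range_add_finrank_ker
    have hker := (Submodule.finrank_mono hkerD).trans (finrank_span_le_card ({1} : Set (ι → K)))
    rw [hS, finrank_top, Module.finrank_self] at hS'
    simp only [Set.toFinset_singleton, Finset.card_singleton] at hker
    omega
  obtain ⟨x, hx⟩ : ε ∈ LinearMap.range D := hrange ▸ show S ε = 0 by simpa [S] using hε
  exact ⟨x, fun i => by simpa [D] using congrFun hx i⟩

theorem exists_forall_eq_comp_add_iff [Fintype ι] [Nonempty ι] (hπ : ∀ a b, π.SameCycle a b)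
    {ε : ι → ZMod 2} (hε : ∑ i, ε i = 0) :
    ∃ y : ι → ZMod 2, ∀ w : ι → ZMod 2, (∀ i, w i = w (π i) + ε i) ↔ w = y ∨ w = y + 1 := by
  obtain ⟨y, hy⟩ := exists_sub_comp_eq_of_sum_eq_zero hπ hε
  have hy' : ∀ i, y i = y (π i) + ε i := fun i => sub_eq_iff_eq_add'.mp (hy i)
  refine ⟨y, fun w => ⟨fun hw => ?_, ?_⟩⟩
  · obtain ⟨i₀⟩ := ‹Nonempty ι›
    have hinv : ∀ i, (w - y) (π i) = (w - y) i := fun i => by simp [hw i, hy' i]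
    have hconst : w = y + fun _ => (w - y) i₀ :=
      funext fun i => by rw [Pi.add_apply, ← apply_eq_of_sameCycle hinv (hπ i₀ i)]; simp
    rcases (by decide : ∀ c : ZMod 2, c = 0 ∨ c = 1) ((w - y) i₀) with hc | hc
    · exact .inl (by rw [hconst, hc]; exact add_zero y)
    · exact .inr (by rw [hconst, hc]; rfl)
  · rintro (rfl | rfl) i
    · exact hy' i
    · simp [hy' i, add_right_comm]

end Equiv.Perm

theorem Int.eq_of_cast_zmodTwo_eq {a b : ℤ} (ha : a = 0 ∨ a = 1) (hb : b = 0 ∨ b = 1)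
    (h : (a : ZMod 2) = b) : a = b := by
  rcases ha with rfl | rfl <;> rcases hb with rfl | rfl <;> first | rfl | exact absurd h (by decide)

theorem Finset.exists_forall_iff_eq_of_card_filter_eq_one {α : Type*} [Fintype α] {p : α → Prop}
    [DecidablePred p] (h : (univ.filter p).card = 1) : ∃ a, ∀ j, p j ↔ j = a := by
  obtain ⟨a, ha⟩ := card_eq_one.mp h
  exact ⟨a, fun j => by simpa using congrArg (j ∈ ·) ha⟩

namespace SDigraph

variable {V : Type} [Fintype V] {G : SDigraph V}

theorem exists_perm_arc_iff (hout : ∀ i, G.underOutdeg i = 1) (hin : ∀ i, G.underIndeg i = 1) :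
    ∃ π : Equiv.Perm V, ∀ i j, G.arc j i ↔ j = π i := by
  choose s hs using fun i => exists_forall_iff_eq_of_card_filter_eq_one (hout i)
  choose p hp using fun i => exists_forall_iff_eq_of_card_filter_eq_one (hin i)
  have hps : ∀ i, p (s i) = i := fun i => ((hp (s i) i).mp ((hs i (s i)).mpr rfl)).symm
  have hsp : ∀ i, s (p i) = i := fun i => ((hs (p i) i).mp ((hp i (p i)).mpr rfl)).symm
  exact ⟨⟨p, s, hsp, hps⟩, hp⟩

omit [Fintype V] in
theorem sameCycle_of_connected {π : Equiv.Perm V} (hπ : ∀ i j, G.arc j i ↔ j = π i)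
    (hconn : G.Connected) (a b : V) : π.SameCycle a b := by
  induction hconn a b with
  | refl => exact Equiv.Perm.SameCycle.refl π a
  | tail _ hbc ih =>
    rcases hbc with hbc | hcb
    · rw [(hπ _ _).mp hbc, Equiv.Perm.sameCycle_apply_right] at ih
      exact ih
    · rw [(hπ _ _).mp hcb]
      exact Equiv.Perm.sameCycle_apply_right.mpr ih

theorem sum_ite_neg_eq_zero {π : V → V} (hπ : ∀ i j, G.arc j i ↔ j = π i)
    (hpos : (univ.filter fun p : V × V => G.neg p.1 p.2 = true).card % 2 = 0) :
    ∑ i, (if G.neg (π i) i = true then 1 else 0 : ZMod 2) = 0 := by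
  have hcard : (univ.filter fun i => G.neg (π i) i = true).card =
      (univ.filter fun p : V × V => G.neg p.1 p.2 = true).card := by
    refine card_nbij' (fun i => (π i, i)) Prod.snd (fun i hi => by simpa using hi) ?_
      (fun i _ => rfl) ?_ <;>
    · intro q hq
      simp only [coe_filter, mem_univ, true_and, Set.mem_ofPred_eq] at hq
      have hq1 : q.1 = π q.2 := (hπ q.2 q.1).mp (Or.inr hq)
      simp [← hq1, hq]
  rw [sum_boole, hcard, ZMod.natCast_eq_zero_iff_even, Nat.even_iff, hpos]

end SDigraph

namespace FDS

variable {V : Type} {F : FDS V} {G : SDigraph V}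

def ofZModTwo (w : V → ZMod 2) : V → ℤ := fun j => ((w j).val : ℤ)

@[simp]
theorem intCast_ofZModTwo (w : V → ZMod 2) (j : V) : ((ofZModTwo w j : ℤ) : ZMod 2) = w j := by
  simp [ofZModTwo]

theorem ofZModTwo_eq_zero_or_eq_one (w : V → ZMod 2) (j : V) :
    ofZModTwo w j = 0 ∨ ofZModTwo w j = 1 := by
  have := (w j).val_lt
  simp only [ofZModTwo]
  omega

theorem ofZModTwo_injective : Injective (ofZModTwo : (V → ZMod 2) → V → ℤ) :=
  fun w w' h => funext fun j => by simpa using congrArg (fun z : V → ℤ => (z j : ZMod 2)) h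

theorem eq_zero_or_eq_one (hBool : ∀ i, F.X i = ({0, 1} : Finset ℤ)) {x : V → ℤ} (hx : F.mem x)
    (j : V) : x j = 0 ∨ x j = 1 := by
  simpa [hBool] using hx j

variable [DecidableEq V]

theorem mem_update {x : V → ℤ} (hx : F.mem x) {j : V} {b : ℤ} (hb : b ∈ F.X j) :
    F.mem (update x j b) := by
  intro l
  by_cases hl : l = j
  · subst hl; simpa using hb
  · simpa [hl] using hx l

theorem arc_of_apply_ne_apply_update_add_one (hG : F.onGraph G) {x : V → ℤ} (hx : F.mem x)
    {j i : V} (hj : x j + 1 ∈ F.X j) (h : F.f x i ≠ F.f (update x j (x j + 1)) i) :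
    G.arc j i := by
  rcases h.lt_or_gt with h | h
  · exact Or.inl ((hG.1 j i).2 ⟨x, hx, hj, h⟩)
  · exact Or.inr ((hG.2 j i).2 ⟨x, hx, hj, h⟩)

section Boolean

variable (hBool : ∀ i, F.X i = ({0, 1} : Finset ℤ))
include hBool

theorem arc_of_apply_ne_apply_update (hG : F.onGraph G) {x : V → ℤ} (hx : F.mem x) {j i : V}
    {b : ℤ} (hb : b ∈ F.X j) (h : F.f x i ≠ F.f (update x j b) i) : G.arc j i := by
  have hb01 : b = 0 ∨ b = 1 := by simpa [hBool] using hb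
  rcases eq_zero_or_eq_one hBool hx j with hxj | hxj <;> rcases hb01 with rfl | rfl
  · simp [← hxj] at h
  · exact arc_of_apply_ne_apply_update_add_one hG hx (by simp [hBool, hxj])
      (by simpa [hxj] using h)
  · have hy := mem_update hx hb
    refine arc_of_apply_ne_apply_update_add_one hG hy (by simp [hBool]) ?_
    simpa [← hxj, eq_comm] using h
  · simp [← hxj] at h

theorem exists_arc_of_apply_ne (hG : F.onGraph G) [Fintype V] {x y : V → ℤ} (hx : F.mem x)
    (hy : F.mem y) {i : V} (h : F.f x i ≠ F.f y i) : ∃ j, x j ≠ y j ∧ G.arc j i := by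
  suffices key : ∀ s : Finset V, ∀ y, F.mem y → (∀ j ∉ s, x j = y j) → F.f x i ≠ F.f y i →
      ∃ j, x j ≠ y j ∧ G.arc j i from key univ y hy (by simp) h
  intro s
  induction s using Finset.induction_on with
  | empty =>
    intro y _ hxy h
    exact absurd (congrArg (F.f · i) (funext fun j => hxy j (notMem_empty j))) h
  | insert a s ha ih =>
    intro y hy hxy h
    by_cases hfa : F.f x i = F.f (update y a (x a)) i
    · have hya : x a ≠ y a := fun hxa => h (by rwa [hxa, update_eq_self] at hfa)
      refine ⟨a, hya, arc_of_apply_ne_apply_update hBool hG hy (hx a) ?_⟩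
      rwa [← hfa, ne_comm]
    · have hxy' : ∀ j ∉ s, x j = update y a (x a) j := fun j hj => by
        by_cases hja : j = a
        · simp [hja]
        · simpa [hja] using hxy j (by simp [hja, hj])
      obtain ⟨j, hj, harc⟩ := ih _ (mem_update hy (hx a)) hxy' hfa
      have hja : j ≠ a := by rintro rfl; simp at hj
      exact ⟨j, by simpa [hja] using hj, harc⟩

theorem apply_eq_apply_of_eq_pred (hG : F.onGraph G) [Fintype V] {i p : V}
    (hp : ∀ j, G.arc j i ↔ j = p) {x y : V → ℤ} (hx : F.mem x) (hy : F.mem y)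
    (hxy : x p = y p) : F.f x i = F.f y i := by
  by_contra h
  obtain ⟨j, hj, harc⟩ := exists_arc_of_apply_ne hBool hG hx hy h
  exact hj ((hp j).mp harc ▸ hxy)

theorem apply_eq_ite_of_pred (hG : F.onGraph G) [Fintype V] {i p : V}
    (hp : ∀ j, G.arc j i ↔ j = p) {x₀ : V → ℤ} (hx₀ : F.mem x₀) (hx₀p : x₀ p + 1 ∈ F.X p)
    {x : V → ℤ} (hx : F.mem x) :
    F.f x i = if x p = 0 then F.f x₀ i else F.f (update x₀ p (x₀ p + 1)) i := by
  have hx₀p0 : x₀ p = 0 := by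
    have : x₀ p + 1 = 0 ∨ x₀ p + 1 = 1 := by simpa [hBool] using hx₀p
    have := eq_zero_or_eq_one hBool hx₀ p
    omega
  rcases eq_zero_or_eq_one hBool hx p with h | h
  · simpa [h] using apply_eq_apply_of_eq_pred hBool hG hp hx hx₀ (by rw [h, hx₀p0])
  · simpa [h] using apply_eq_apply_of_eq_pred hBool hG hp hx (mem_update hx₀ hx₀p)
      (by simp [h, hx₀p0])

theorem intCast_apply_eq (hG : F.onGraph G) [Fintype V] {i p : V}
    (hp : ∀ j, G.arc j i ↔ j = p) {x : V → ℤ} (hx : F.mem x) :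
    ((F.f x i : ℤ) : ZMod 2) = x p + if G.neg p i = true then 1 else 0 := by
  by_cases hneg : G.neg p i = true
  · obtain ⟨x₀, hx₀, hx₀p, hlt⟩ := (hG.2 p i).mp hneg
    have h₀ := eq_zero_or_eq_one hBool (F.maps x₀ hx₀) i
    have h₁ := eq_zero_or_eq_one hBool (F.maps _ (mem_update hx₀ hx₀p)) i
    rw [apply_eq_ite_of_pred hBool hG hp hx₀ hx₀p hx]
    rcases eq_zero_or_eq_one hBool hx p with h | h
    · simp [h, hneg, show F.f x₀ i = 1 by omega]
    · simp [h, hneg, show F.f (update x₀ p (x₀ p + 1)) i = 0 by omega]; decide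
  · have hpos : G.pos p i = true := ((hp p).mpr rfl).resolve_right hneg
    obtain ⟨x₀, hx₀, hx₀p, hlt⟩ := (hG.1 p i).mp hpos
    have h₀ := eq_zero_or_eq_one hBool (F.maps x₀ hx₀) i
    have h₁ := eq_zero_or_eq_one hBool (F.maps _ (mem_update hx₀ hx₀p)) i
    rw [apply_eq_ite_of_pred hBool hG hp hx₀ hx₀p hx]
    rcases eq_zero_or_eq_one hBool hx p with h | h
    · simp [h, hneg, show F.f x₀ i = 0 by omega]
    · simp [h, hneg, show F.f (update x₀ p (x₀ p + 1)) i = 1 by omega]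

theorem isFixed_iff_exists_ofZModTwo (hG : F.onGraph G) [Fintype V] {π : V → V}
    (hπ : ∀ i j, G.arc j i ↔ j = π i) {z : V → ℤ} :
    F.IsFixed z ↔ ∃ w : V → ZMod 2,
      (∀ i, w i = w (π i) + if G.neg (π i) i = true then 1 else 0) ∧ z = ofZModTwo w := by
  constructor
  · rintro ⟨hz, hfz⟩
    refine ⟨fun j => (z j : ZMod 2), fun i => ?_, funext fun j => ?_⟩
    · rw [← intCast_apply_eq hBool hG (hπ i) hz, hfz]
    · exact Int.eq_of_cast_zmodTwo_eq (eq_zero_or_eq_one hBool hz j)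
        (ofZModTwo_eq_zero_or_eq_one _ j) (by simp)
  · rintro ⟨w, hw, rfl⟩
    have hmem : F.mem (ofZModTwo w) := fun j => by
      rcases ofZModTwo_eq_zero_or_eq_one w j with h | h <;> simp [hBool, h]
    refine ⟨hmem, funext fun i => ?_⟩
    refine Int.eq_of_cast_zmodTwo_eq (eq_zero_or_eq_one hBool (F.maps _ hmem) i)
      (ofZModTwo_eq_zero_or_eq_one w i) ?_
    rw [intCast_apply_eq hBool hG (hπ i) hmem, intCast_ofZModTwo, intCast_ofZModTwo, hw i]

end Boolean

end FDS

/-- A Boolean network whose interaction graph is a positive signed cycle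
has exactly two fixed points. -/
theorem stmt8 (n : ℕ) (F : FDS (Fin n)) (hBool : ∀ i, F.X i = ({0, 1} : Finset ℤ))
    (G : SDigraph (Fin n)) (hG : F.onGraph G) (hc : SDigraph.IsSignedCycleGraph G)
    (hpos : (Finset.univ.filter fun p : Fin n × Fin n => G.neg p.1 p.2 = true).card % 2 = 0) :
    ∃ x y : Fin n → ℤ, x ≠ y ∧ F.IsFixed x ∧ F.IsFixed y ∧
      ∀ z, F.IsFixed z → z = x ∨ z = y := by
  obtain ⟨hn, hconn, -, hout, hin⟩ := hc
  have : Nonempty (Fin n) := Fin.pos_iff_nonempty.mp (by simpa using hn)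
  obtain ⟨π, hπ⟩ := SDigraph.exists_perm_arc_iff hout hin
  obtain ⟨y, hy⟩ := Equiv.Perm.exists_forall_eq_comp_add_iff
    (SDigraph.sameCycle_of_connected hπ hconn) (SDigraph.sum_ite_neg_eq_zero hπ hpos)
  have hfix : ∀ z, F.IsFixed z ↔ z = FDS.ofZModTwo y ∨ z = FDS.ofZModTwo (y + 1) := by
    intro z
    simp [FDS.isFixed_iff_exists_ofZModTwo hBool hG hπ, hy, or_and_right, exists_or]
  refine ⟨_, _, ?_, (hfix _).2 (.inl rfl), (hfix _).2 (.inr rfl), fun z hz => (hfix z).1 hz⟩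
  exact FDS.ofZModTwo_injective.ne (succ_ne_self y).symm
end

section
/- Let G be a signed digraph whose underlying digraph is the directed cycle 1→2→…→n→1 and which has at least one pair of parallel arcs (a positive and a negative arc between the same ordered pair of consecutive vertices). Then there exists a degree-bounded FDS f on G with f^(n+1) constant. -/
open scoped Classical

/-!
Give vertex `i` the states `{0, …, m_i}`, where `m_i = 2` if `i` has parallel outgoing arcs and
`m_i = 1` otherwise, and let `f_i` read only `x_{i-1}`: it takes the value `m_i` at a single state
of `x_{i-1}` (the state `1` if the arc into `i` is positive, `0` if it is only negative) and `0`
elsewhere. Raising `x_{i-1}` by one then moves `f_i` exactly in the directions given by the signs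
of the arcs into `i`, and `|X_i| = m_i + 1` is at most the out-degree of `i` plus one.

If `i₀ → i₀ + 1` carries both signs, `f_{i₀}` only takes the values `0` and `2`, never the state `1`
to which `f_{i₀+1}` responds, so coordinate `i₀ + 1` is `0` after two steps. As each coordinate
only reads its predecessor, this constancy travels once around the cycle in `n` more steps.
-/

lemma Finset.card_filter_univ_eq_toNat {α : Type} [Fintype α] {b : α → Bool}
    {a : α} (hb : ∀ j, b j = true → j = a) :
    (Finset.univ.filter fun j => b j = true).card = (b a).toNat := by
  cases hba : b a
  · refine Finset.card_eq_zero.2 (Finset.filter_eq_empty_iff.2 fun j _ hj => ?_)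
    rw [hb j hj, hba] at hj
    exact Bool.false_ne_true hj
  · refine Finset.card_eq_one.2 ⟨a, ?_⟩
    ext j
    simp only [Finset.mem_filter, Finset.mem_univ, true_and, Finset.mem_singleton]
    exact ⟨hb j, fun hj => hj ▸ hba⟩

namespace FDS

variable {V : Type}

lemma exists_update_iff_of_local [DecidableEq V] (F : FDS V) {p : V → V} {g : V → ℤ → ℤ}
    (hf : ∀ x i, F.f x i = g i (x (p i))) {r : ℤ → ℤ → Prop} (hr : ∀ b, ¬ r b b) (j i : V) :
    (∃ x, F.mem x ∧ x j + 1 ∈ F.X j ∧ r (F.f x i) (F.f (Function.update x j (x j + 1)) i)) ↔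
      j = p i ∧ ∃ a ∈ F.X j, a + 1 ∈ F.X j ∧ r (g i a) (g i (a + 1)) := by
  constructor
  · rintro ⟨x, hx, hx1, hxr⟩
    by_cases hj : j = p i
    · subst hj
      exact ⟨rfl, x (p i), hx _, hx1, by simpa [hf] using hxr⟩
    · rw [hf, hf, Function.update_of_ne (Ne.symm hj)] at hxr
      exact absurd hxr (hr _)
  · rintro ⟨rfl, a, ha, ha1, har⟩
    let x₀ : V → ℤ := fun k => (F.nonempty k).choose
    refine ⟨Function.update x₀ (p i) a, fun k => ?_, by simpa using ha1, by simpa [hf] using har⟩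
    by_cases hk : k = p i
    · subst hk; simpa using ha
    · simpa [hk] using (F.nonempty k).choose_spec

end FDS

section LocalIterate

variable {V α : Type} {f : (V → α) → V → α}

lemma iterate_apply_eq_of_le {k m : ℕ} {i : V} (h : ∀ x y, f^[k] x i = f^[k] y i) (hkm : k ≤ m)
    (x y : V → α) : f^[m] x i = f^[m] y i := by
  obtain ⟨d, rfl⟩ := Nat.exists_eq_add_of_le hkm
  rw [Function.iterate_add_apply, Function.iterate_add_apply]
  exact h _ _

lemma iterate_succ_apply_eq_of_local {p : V → V}
    (hf : ∀ x y i, x (p i) = y (p i) → f x i = f y i) {k : ℕ} {i : V}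
    (h : ∀ x y, f^[k] x (p i) = f^[k] y (p i)) (x y : V → α) :
    f^[k + 1] x i = f^[k + 1] y i := by
  rw [Function.iterate_succ_apply', Function.iterate_succ_apply']
  exact hf _ _ _ (h x y)

open Fin.NatCast in
lemma iterate_eq_of_cycle_local {n : ℕ} {f : (Fin (n + 1) → α) → Fin (n + 1) → α}
    (hf : ∀ x y i, x (i - 1) = y (i - 1) → f x i = f y i) {k : ℕ} {a : Fin (n + 1)}
    (h : ∀ x y, f^[k] x a = f^[k] y a) (x y : Fin (n + 1) → α) : f^[k + n] x = f^[k + n] y := by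
  have hprop : ∀ t : ℕ, ∀ x y, f^[k + t] x (a + t) = f^[k + t] y (a + t) := by
    intro t
    induction t with
    | zero => simpa using h
    | succ t ih =>
      refine iterate_succ_apply_eq_of_local (p := fun i => i - 1) hf ?_
      rwa [Nat.cast_succ, ← add_assoc, add_sub_cancel_right]
  funext j
  have hj : a + (((j - a).val : ℕ) : Fin (n + 1)) = j := by
    rw [Fin.cast_val_eq_self, add_sub_cancel]
  rw [← hj]
  exact iterate_apply_eq_of_le (hprop _) (by have := (j - a).isLt; omega) x y

end LocalIterate

/-- `sp`, `sn`: the signs of the arc into the vertex; `h`: the vertex's largest state. -/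
def arcRule (sp sn : Bool) (h a : ℤ) : ℤ :=
  if (a = 1 ∧ sp = true) ∨ (a = 0 ∧ sn = true ∧ sp = false) then h else 0

/-- The largest state of a vertex whose outgoing arc has signs `sp`, `sn`. -/
def arcWidth (sp sn : Bool) : ℤ := if sp = true ∧ sn = true then 2 else 1

lemma one_le_arcWidth (sp sn : Bool) : 1 ≤ arcWidth sp sn := by
  unfold arcWidth; split <;> norm_num

lemma arcRule_eq_zero_or_eq (sp sn : Bool) (h a : ℤ) :
    arcRule sp sn h a = 0 ∨ arcRule sp sn h a = h := by
  unfold arcRule; split <;> simp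

lemma arcRule_mem_Icc {sp sn : Bool} {h : ℤ} (hh : 0 ≤ h) (a : ℤ) :
    arcRule sp sn h a ∈ Finset.Icc 0 h := by
  rcases arcRule_eq_zero_or_eq sp sn h a with e | e <;> simp [e, hh]

lemma exists_arcRule_lt_iff (sp sn : Bool) {h : ℤ} (hh : 0 < h) :
    (∃ a ∈ Finset.Icc 0 (arcWidth sp sn), a + 1 ∈ Finset.Icc 0 (arcWidth sp sn) ∧
      arcRule sp sn h a < arcRule sp sn h (a + 1)) ↔ sp = true := by
  constructor
  · rintro ⟨a, ha, ha1, hlt⟩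
    simp only [Finset.mem_Icc] at ha ha1
    have hw : arcWidth sp sn ≤ 2 := by unfold arcWidth; split <;> norm_num
    obtain rfl | rfl : a = 0 ∨ a = 1 := by omega
    all_goals cases sp <;> cases sn <;> simp_all [arcRule, arcWidth] <;> omega
  · intro hsp
    refine ⟨0, ?_, ?_, ?_⟩
    all_goals cases sn <;> simp [arcWidth, arcRule, hsp, hh]

lemma exists_arcRule_gt_iff (sp sn : Bool) {h : ℤ} (hh : 0 < h) :
    (∃ a ∈ Finset.Icc 0 (arcWidth sp sn), a + 1 ∈ Finset.Icc 0 (arcWidth sp sn) ∧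
      arcRule sp sn h (a + 1) < arcRule sp sn h a) ↔ sn = true := by
  constructor
  · rintro ⟨a, ha, ha1, hlt⟩
    simp only [Finset.mem_Icc] at ha ha1
    have hw : arcWidth sp sn ≤ 2 := by unfold arcWidth; split <;> norm_num
    obtain rfl | rfl : a = 0 ∨ a = 1 := by omega
    all_goals cases sp <;> cases sn <;> simp_all [arcRule, arcWidth] <;> omega
  · intro hsn
    cases sp
    · exact ⟨0, by simp [arcWidth, arcRule, hsn, hh]⟩
    · exact ⟨1, by simp [arcWidth, arcRule, hsn, hh]⟩

lemma arcRule_true_true (h a : ℤ) : arcRule true true h a = if a = 1 then h else 0 := by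
  simp [arcRule]

lemma card_Icc_arcWidth_le {sp sn : Bool} (h : sp = true ∨ sn = true) :
    (Finset.Icc 0 (arcWidth sp sn)).card ≤ sp.toNat + sn.toNat + 1 := by
  cases sp <;> cases sn <;> simp_all [arcWidth]

namespace SDigraph

variable {n : ℕ} (G : SDigraph (Fin (n + 1)))

def succWidth (i : Fin (n + 1)) : ℤ := arcWidth (G.pos i (i + 1)) (G.neg i (i + 1))

lemma one_le_succWidth (i : Fin (n + 1)) : 1 ≤ G.succWidth i := one_le_arcWidth _ _

noncomputable def cycleFDS : FDS (Fin (n + 1)) where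
  X i := Finset.Icc 0 (G.succWidth i)
  nonempty i := ⟨0, Finset.mem_Icc.2 ⟨le_rfl, by linarith [G.one_le_succWidth i]⟩⟩
  interval i a ha b hb c hac hcb := by
    simp only [Finset.mem_Icc] at *
    omega
  f x i := arcRule (G.pos (i - 1) i) (G.neg (i - 1) i) (G.succWidth i) (x (i - 1))
  maps x _ i := arcRule_mem_Icc (by linarith [G.one_le_succWidth i]) _

lemma cycleFDS_f_apply (x : Fin (n + 1) → ℤ) (i : Fin (n + 1)) :
    G.cycleFDS.f x i = arcRule (G.pos (i - 1) i) (G.neg (i - 1) i) (G.succWidth i) (x (i - 1)) :=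
  rfl

lemma cycleFDS_X_sub_one (i : Fin (n + 1)) :
    G.cycleFDS.X (i - 1) = Finset.Icc 0 (arcWidth (G.pos (i - 1) i) (G.neg (i - 1) i)) := by
  simp only [cycleFDS, succWidth, sub_add_cancel]

variable {G}

lemma eq_sub_one_of_arc (hcyc : ∀ i j : Fin (n + 1), G.arc i j ↔ j = i + 1) {i j : Fin (n + 1)}
    (h : G.arc j i) : j = i - 1 := by
  rw [(hcyc j i).1 h, add_sub_cancel_right]

lemma cycleFDS_onGraph (hcyc : ∀ i j : Fin (n + 1), G.arc i j ↔ j = i + 1) :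
    G.cycleFDS.onGraph G := by
  have hloc := G.cycleFDS_f_apply
  have hh : ∀ i, 0 < G.succWidth i := fun i => G.one_le_succWidth i
  constructor <;> intro j i
  · rw [FDS.exists_update_iff_of_local _ hloc (r := (· < ·)) lt_irrefl]
    constructor
    · intro h
      obtain rfl := eq_sub_one_of_arc hcyc (Or.inl h)
      exact ⟨rfl, by rw [cycleFDS_X_sub_one, exists_arcRule_lt_iff _ _ (hh i)]; exact h⟩
    · rintro ⟨rfl, h⟩
      rwa [cycleFDS_X_sub_one, exists_arcRule_lt_iff _ _ (hh i)] at h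
  · rw [FDS.exists_update_iff_of_local _ hloc (r := fun a b => b < a) lt_irrefl]
    constructor
    · intro h
      obtain rfl := eq_sub_one_of_arc hcyc (Or.inr h)
      exact ⟨rfl, by rw [cycleFDS_X_sub_one, exists_arcRule_gt_iff _ _ (hh i)]; exact h⟩
    · rintro ⟨rfl, h⟩
      rwa [cycleFDS_X_sub_one, exists_arcRule_gt_iff _ _ (hh i)] at h

lemma outdeg_eq_of_cycle (hcyc : ∀ i j : Fin (n + 1), G.arc i j ↔ j = i + 1) (i : Fin (n + 1)) :
    G.outdeg i = (G.pos i (i + 1)).toNat + (G.neg i (i + 1)).toNat := by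
  unfold outdeg
  rw [Finset.card_filter_univ_eq_toNat fun j h => (hcyc i j).1 (Or.inl h),
    Finset.card_filter_univ_eq_toNat fun j h => (hcyc i j).1 (Or.inr h)]

lemma cycleFDS_degreeBounded (hcyc : ∀ i j : Fin (n + 1), G.arc i j ↔ j = i + 1) :
    G.cycleFDS.degreeBounded G := by
  intro i
  have harc : G.arc i (i + 1) := (hcyc i (i + 1)).2 rfl
  have hout : 0 < G.outdeg i := by
    rw [outdeg_eq_of_cycle hcyc]
    rcases harc with h | h <;> simp [h]
  refine ⟨fun h => absurd h.1 hout.ne', fun _ => ?_⟩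
  rw [outdeg_eq_of_cycle hcyc]
  exact card_Icc_arcWidth_le harc

lemma cycleFDS_iterate_two_apply_succ {i₀ : Fin (n + 1)}
    (hp : G.pos i₀ (i₀ + 1) = true ∧ G.neg i₀ (i₀ + 1) = true) (x : Fin (n + 1) → ℤ) :
    G.cycleFDS.f^[2] x (i₀ + 1) = 0 := by
  have hwidth : G.succWidth i₀ = 2 := by simp [succWidth, arcWidth, hp]
  have hne : G.cycleFDS.f x i₀ ≠ 1 := by
    rcases arcRule_eq_zero_or_eq (G.pos (i₀ - 1) i₀) (G.neg (i₀ - 1) i₀) (G.succWidth i₀)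
      (x (i₀ - 1)) with h | h <;> rw [cycleFDS_f_apply, h] <;> omega
  rw [Function.iterate_succ_apply', Function.iterate_one, cycleFDS_f_apply, add_sub_cancel_right,
    hp.1, hp.2, arcRule_true_true, if_neg hne]

end SDigraph

/-- If the underlying digraph of `G` is the directed cycle
`0 → 1 → ⋯ → n → 0` on `n+1` vertices and `G` has at least one pair of parallel arcs,
then there is a degree-bounded FDS `f` on `G` with `f^((n+1)+1)` constant. -/
theorem stmt12 (n : ℕ) (G : SDigraph (Fin (n + 1)))
    (hcyc : ∀ i j : Fin (n + 1), G.arc i j ↔ j = i + 1)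
    (hpar : ∃ i : Fin (n + 1), G.pos i (i + 1) = true ∧ G.neg i (i + 1) = true) :
    ∃ F : FDS (Fin (n + 1)), F.onGraph G ∧ F.degreeBounded G ∧
      ∃ c : Fin (n + 1) → ℤ, ∀ x, F.mem x → F.f^[(n + 1) + 1] x = c := by
  obtain ⟨i₀, hp⟩ := hpar
  have hlocal : ∀ x y i, x (i - 1) = y (i - 1) → G.cycleFDS.f x i = G.cycleFDS.f y i :=
    fun x y i h => by rw [G.cycleFDS_f_apply, G.cycleFDS_f_apply, h]
  have hconst : ∀ x y, G.cycleFDS.f^[2] x (i₀ + 1) = G.cycleFDS.f^[2] y (i₀ + 1) := fun x y => by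
    rw [SDigraph.cycleFDS_iterate_two_apply_succ hp, SDigraph.cycleFDS_iterate_two_apply_succ hp]
  refine ⟨G.cycleFDS, SDigraph.cycleFDS_onGraph hcyc, SDigraph.cycleFDS_degreeBounded hcyc,
    G.cycleFDS.f^[2 + n] 0, fun x _ => ?_⟩
  rw [show n + 1 + 1 = 2 + n by omega]
  exact iterate_eq_of_cycle_local hlocal hconst x 0
end

section
/- Suppose G is a connected signed digraph, H is obtained from G by removing the single arc from i to j, where in G vertex i has in-degree 1, out-degree 1, and vertex j has in-degree 1. Then for any degree-bounded system h:Y→Y on H, there is no degree-bounded system f:X→X on G that converges toward h. -/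
open scoped Classical

/-! Degree-boundedness forces `|Y_i| = 2` (in `H`, `i` has lost its only out-arc) and
`|X_i| ≤ 2`, so `Y_i = X_i`. In `G` the only in-neighbour of `j` is `i`, so `f_j` depends on
`x_i` alone and is non-constant in it; in `H`, `j` has no in-neighbour, so `h_j` is constant on
`Y`. Since `f = h` on `Y` and `Y` contains states with any value of `x_i ∈ X_i`, this is
impossible. -/

namespace SDigraph

variable {V : Type}

section Degree

variable [Fintype V] (G : SDigraph V)

theorem underOutdeg_le_outdeg (a : V) : G.underOutdeg a ≤ G.outdeg a :=
  (Finset.card_le_card fun b hb => by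
    rcases (Finset.mem_filter.1 hb).2 with h | h <;> simp [h]).trans (Finset.card_union_le _ _)

theorem underIndeg_le_indeg (b : V) : G.underIndeg b ≤ G.indeg b :=
  (Finset.card_le_card fun a ha => by
    rcases (Finset.mem_filter.1 ha).2 with h | h <;> simp [h]).trans (Finset.card_union_le _ _)

variable {G}

theorem eq_of_arc_of_outdeg_le_one {a b c : V} (ha : G.outdeg a ≤ 1)
    (hb : G.arc a b) (hc : G.arc a c) : b = c :=
  Finset.card_le_one.1 ((G.underOutdeg_le_outdeg a).trans ha) b (by simpa using hb) c
    (by simpa using hc)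

theorem eq_of_arc_of_indeg_le_one {a b c : V} (hc : G.indeg c ≤ 1)
    (ha : G.arc a c) (hb : G.arc b c) : a = b :=
  Finset.card_le_one.1 ((G.underIndeg_le_indeg c).trans hc) a (by simpa using ha) b
    (by simpa using hb)

theorem outdeg_eq_zero_iff {a : V} : G.outdeg a = 0 ↔ ∀ b, ¬ G.arc a b := by
  simp only [outdeg, arc, Nat.add_eq_zero_iff, Finset.card_eq_zero, Finset.filter_eq_empty_iff,
    Finset.mem_univ, true_implies, not_or, forall_and]

end Degree

def IsArcDeletion (H G : SDigraph V) (i j : V) : Prop :=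
  ∀ a b, (H.pos a b = true ↔ G.pos a b = true ∧ ¬(a = i ∧ b = j)) ∧
    (H.neg a b = true ↔ G.neg a b = true ∧ ¬(a = i ∧ b = j))

namespace IsArcDeletion

variable {G H : SDigraph V} {i j : V}

theorem arc_iff (hH : H.IsArcDeletion G i j) (a b : V) :
    H.arc a b ↔ G.arc a b ∧ ¬(a = i ∧ b = j) := by
  simp only [arc, (hH a b).1, (hH a b).2]
  tauto

variable [Fintype V]

theorem indeg_eq (hH : H.IsArcDeletion G i j) {b : V} (hb : b ≠ j) :
    H.indeg b = G.indeg b := by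
  simp only [indeg, (hH _ b).1, (hH _ b).2, hb, and_false, not_false_eq_true, and_true]

theorem outdeg_eq_zero (hH : H.IsArcDeletion G i j) (hi : G.outdeg i ≤ 1) (hij : G.arc i j) :
    H.outdeg i = 0 :=
  outdeg_eq_zero_iff.2 fun b hb =>
    ((hH.arc_iff i b).1 hb).2 ⟨rfl, eq_of_arc_of_outdeg_le_one hi ((hH.arc_iff i b).1 hb).1 hij⟩

theorem not_arc (hH : H.IsArcDeletion G i j) (hj : G.indeg j ≤ 1) (hij : G.arc i j) (a : V) :
    ¬ H.arc a j := fun ha =>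
  ((hH.arc_iff a j).1 ha).2 ⟨eq_of_arc_of_indeg_le_one hj ((hH.arc_iff a j).1 ha).1 hij, rfl⟩

end IsArcDeletion

end SDigraph

namespace FDS

variable {V : Type} [DecidableEq V] {F : FDS V} {G : SDigraph V}

theorem mem.update {x : V → ℤ} (hx : F.mem x) {a : V} {v : ℤ} (hv : v ∈ F.X a) :
    F.mem (Function.update x a v) := by
  intro b
  rcases eq_or_ne b a with rfl | hb
  · simpa using hv
  · simpa [hb] using hx b

theorem exists_apply_update_ne_of_arc (hFG : F.onGraph G) {a c : V} (hac : G.arc a c) :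
    ∃ x, F.mem x ∧ x a + 1 ∈ F.X a ∧ F.f x c ≠ F.f (Function.update x a (x a + 1)) c := by
  rcases hac with hpos | hneg
  · obtain ⟨x, hx, hx1, hlt⟩ := (hFG.1 a c).1 hpos
    exact ⟨x, hx, hx1, hlt.ne⟩
  · obtain ⟨x, hx, hx1, hlt⟩ := (hFG.2 a c).1 hneg
    exact ⟨x, hx, hx1, hlt.ne'⟩

theorem apply_update_succ_eq_of_not_arc (hFG : F.onGraph G) {a c : V} (hac : ¬ G.arc a c)
    {x : V → ℤ} (hx : F.mem x) (hx1 : x a + 1 ∈ F.X a) :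
    F.f (Function.update x a (x a + 1)) c = F.f x c := by
  by_contra hne
  rcases lt_or_gt_of_ne hne with hlt | hgt
  · exact hac (Or.inr ((hFG.2 a c).2 ⟨x, hx, hx1, hlt⟩))
  · exact hac (Or.inl ((hFG.1 a c).2 ⟨x, hx, hx1, hgt⟩))

theorem apply_update_eq_of_not_arc (hFG : F.onGraph G) {a c : V} (hac : ¬ G.arc a c)
    {x : V → ℤ} (hx : F.mem x) {v : ℤ} (hv : v ∈ F.X a) :
    F.f (Function.update x a v) c = F.f x c := by
  have key : ∀ m ∈ F.X a, ∀ n, m ≤ n → n ∈ F.X a →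
      F.f (Function.update x a n) c = F.f (Function.update x a m) c := by
    intro m hm n hmn
    induction n, hmn using Int.leInduction with
    | base => exact fun _ => rfl
    | succ n hmn ih =>
      intro hn1
      have hn : n ∈ F.X a := F.interval a m hm (n + 1) hn1 n hmn (by omega)
      have hy := hx.update hn
      rw [← ih hn, ← apply_update_succ_eq_of_not_arc hFG hac hy (by simpa using hn1)]
      simp
  rcases le_total (x a) v with hle | hle
  · simpa using key (x a) (hx a) v hle hv
  · simpa using (key v hv (x a) hle (hx a)).symm

theorem apply_eq_of_forall_arc_eq [Fintype V] (hFG : F.onGraph G) {c : V} {x x' : V → ℤ}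
    (hx : F.mem x) (hx' : F.mem x') (hxx' : ∀ a, G.arc a c → x a = x' a) :
    F.f x c = F.f x' c := by
  suffices ∀ s : Finset V, (∀ a ∈ s, ¬ G.arc a c) →
      ∀ y, F.mem y → (∀ a ∉ s, y a = x' a) → F.f y c = F.f x' c from
    this {a | ¬ G.arc a c} (by simp) x hx fun a ha => hxx' a (by simpa using ha)
  intro s
  induction s using Finset.induction_on with
  | empty => exact fun _ y _ hy => by simp [funext fun a => hy a (Finset.notMem_empty a)]
  | insert a t _ ih =>
    intro hs y hy hyx'
    rw [← apply_update_eq_of_not_arc hFG (hs a (by simp)) hy (hx' a)]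
    refine ih (fun b hb => hs b (by simp [hb])) _ (hy.update (hx' a)) fun b hb => ?_
    rcases eq_or_ne b a with rfl | hba
    · simp
    · simpa [hba] using hyx' b (by simp [hba, hb])

end FDS

theorem stmt14_general (n : ℕ) (G H : SDigraph (Fin n))
    (i j : Fin n) (hij : i ≠ j) (harc : G.arc i j)
    (hin_i : SDigraph.indeg G i = 1) (hout_i : SDigraph.outdeg G i = 1)
    (hin_j : SDigraph.indeg G j = 1)
    (hHpos : ∀ a b, H.pos a b = true ↔ (G.pos a b = true ∧ ¬(a = i ∧ b = j)))
    (hHneg : ∀ a b, H.neg a b = true ↔ (G.neg a b = true ∧ ¬(a = i ∧ b = j)))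
    (h : FDS (Fin n)) (hhG : h.onGraph H) (hhdb : h.degreeBounded H) :
    ¬ ∃ (f : FDS (Fin n)) (k : ℕ),
        f.onGraph G ∧ f.degreeBounded G ∧ f.ConvergesToward h k := by
  rintro ⟨f, k, hfG, hfdb, hYX, -, hfh⟩
  have hH : H.IsArcDeletion G i j := fun a b => ⟨hHpos a b, hHneg a b⟩
  have hG_in_j (a : Fin n) (ha : G.arc a j) : a = i :=
    SDigraph.eq_of_arc_of_indeg_le_one hin_j.le ha harc
  have hYi_card : (h.X i).card = 2 :=
    (hhdb i).1 ⟨hH.outdeg_eq_zero hout_i.le harc, by rw [hH.indeg_eq hij, hin_i]; simp⟩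
  have hXi_card : (f.X i).card ≤ 2 := by simpa [hout_i] using (hfdb i).2 (by simp [hout_i])
  have hXY : h.X i = f.X i := Finset.eq_of_subset_of_card_le (hYX i) (by omega)
  obtain ⟨x, hx, hx1, hne⟩ := f.exists_apply_update_ne_of_arc hfG harc
  obtain ⟨y, hy⟩ : ∃ y, h.mem y := ⟨_, fun a => (h.nonempty a).choose_spec⟩
  have hy0 : h.mem (Function.update y i (x i)) := hy.update (hXY ▸ hx i)
  have hy1 : h.mem (Function.update y i (x i + 1)) := hy.update (hXY ▸ hx1)
  have hfy (z : Fin n → ℤ) (hz : h.mem z) : f.mem z := fun a => hYX a (hz a)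
  refine hne ?_
  calc f.f x j = f.f (Function.update y i (x i)) j :=
        f.apply_eq_of_forall_arc_eq hfG hx (hfy _ hy0) fun a ha => by simp [hG_in_j a ha]
    _ = h.f (Function.update y i (x i)) j := congrFun (hfh _ hy0) j
    _ = h.f (Function.update y i (x i + 1)) j :=
        h.apply_eq_of_forall_arc_eq hhG hy0 hy1 fun a ha => absurd ha (hH.not_arc hin_j.le harc a)
    _ = f.f (Function.update y i (x i + 1)) j := (congrFun (hfh _ hy1) j).symm
    _ = f.f (Function.update x i (x i + 1)) j :=
        f.apply_eq_of_forall_arc_eq hfG (hfy _ hy1) (hx.update hx1) fun a ha => by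
          simp [hG_in_j a ha]

/-- Let `G` be connected, and let `H` be obtained from `G` by removing
the single arc from `i` to `j`, where in `G` the vertex `i` has in-degree 1 and
out-degree 1 and `j` has in-degree 1.  Then no degree-bounded system on `G` converges
toward a given degree-bounded system on `H`. -/
theorem stmt14 (n : ℕ) (G H : SDigraph (Fin n)) (hconn : SDigraph.Connected G)
    (i j : Fin n) (hij : i ≠ j) (harc : G.arc i j)
    (hin_i : SDigraph.indeg G i = 1) (hout_i : SDigraph.outdeg G i = 1)
    (hin_j : SDigraph.indeg G j = 1)
    (hHpos : ∀ a b, H.pos a b = true ↔ (G.pos a b = true ∧ ¬(a = i ∧ b = j)))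
    (hHneg : ∀ a b, H.neg a b = true ↔ (G.neg a b = true ∧ ¬(a = i ∧ b = j)))
    (h : FDS (Fin n)) (hhG : h.onGraph H) (hhdb : h.degreeBounded H) :
    ¬ ∃ (f : FDS (Fin n)) (k : ℕ),
        f.onGraph G ∧ f.degreeBounded G ∧ f.ConvergesToward h k :=
  stmt14_general n G H i j hij harc hin_i hout_i hin_j hHpos hHneg h hhG hhdb
end
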